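/- arXiv:0810.5524 — 7 statements merged into one kernel-verified Lean document; each statement's English description precedes it below -/
import Mathlib

section
/- Every circular arc graph G on n ≥ 2 vertices admits a circular arc representation in which (1) all 2n endpoints of the arcs are distinct, (2) the left endpoints of the arcs are spaced uniformly at angular distance 2π/n around the circle, and (3) no endpoint lies on any of a prescribed finite set of reference lines through the center. -/
noncomputable section

/-- The circle of circumference `2π`, as `ℝ / 2πℤ`. -/
abbrev Circle2pi := AddCircle (2 * Real.pi)

/-- The closed arc traversed clockwise (decreasing angle) from the angle `s`
(its left endpoint) through angular length `ℓ`; its right endpoint is `s - ℓ`. -/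
def arcSet (s ℓ : ℝ) : Set Circle2pi :=
  (fun t : ℝ => ((s - t : ℝ) : Circle2pi)) '' Set.Icc 0 ℓ

/-- `f` is a circular-arc representation of `G`: each vertex gets a (start angle, length)
pair describing a proper closed arc, and distinct vertices are adjacent iff
their arcs intersect. -/
def IsCARep {V : Type*} (G : SimpleGraph V) (f : V → ℝ × ℝ) : Prop :=
  (∀ v, 0 < (f v).2 ∧ (f v).2 < 2 * Real.pi) ∧
  ∀ u v, u ≠ v →
    (G.Adj u v ↔ (arcSet (f u).1 (f u).2 ∩ arcSet (f v).1 (f v).2).Nonempty)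

/-- `box(G) ≤ k`: `G` is the intersection of `k` interval graphs on `V`. -/
def BoxicityLE {V : Type*} (G : SimpleGraph V) (k : ℕ) : Prop :=
  ∃ I : Fin k → V → Set ℝ,
    (∀ i v, ∃ a b : ℝ, a ≤ b ∧ I i v = Set.Icc a b) ∧
    ∀ u v : V, u ≠ v → (G.Adj u v ↔ ∀ i, (I i u ∩ I i v).Nonempty)

/-- Reflection of the circle across the line through the center at angle `θ`. -/
def reflMap (θ : ℝ) : Circle2pi → Circle2pi := fun p => ((2 * θ : ℝ) : Circle2pi) - p

/-- The open sector `S_k` (numbered anticlockwise from the positive x-axis):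
points of the circle with angle strictly between `πk/α` and `π(k+1)/α`. -/
def sector (α : ℕ) (k : ℤ) : Set Circle2pi :=
  (fun t : ℝ => (t : Circle2pi)) '' Set.Ioo (Real.pi * k / α) (Real.pi * (k + 1) / α)

/-- Signed coordinate of a point of the circle when orthogonally projected onto the
line through the center at angle `θ` (identified with ℝ). -/
def projCoord (θ : ℝ) : Circle2pi → ℝ :=
  Function.Periodic.lift
    (f := fun x : ℝ => Real.cos (x - θ))
    (fun x => by simp only []; rw [show x + 2 * Real.pi - θ = (x - θ) + 2 * Real.pi by ring,
      Real.cos_add_two_pi])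

/-!
Two arcs meet iff one of them contains the left endpoint of the other, so a representation is
determined, up to the graph it defines, by the clockwise cyclic order of the left endpoints and,
for each arc, how many of the following left endpoints it covers. Sorting the left endpoints
clockwise (of two arcs with a common left endpoint only the earlier one is said to cover the other)
makes the left endpoints covered by arc `u` an initial segment of length `m u + 1` of the cyclic
order starting at `u`. Placing the `i`-th left endpoint at `θ₀ - 2πi/n` and giving that arc length
`2π m/n + 2π(i+1)/(n(n+1))` preserves this data, and all `2n` endpoints become distinct points
`θ₀ - 2πE/(n(n+1))`. Choosing `θ₀` so that `θ₀ - θ` is not a rational multiple of `π` for any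
reference angle `θ` keeps every endpoint off the reference lines.
-/

open Real

/-- The clockwise angle from `x` to `y`, normalized to `[0, 2π)`. -/
def cwDist (x y : ℝ) : ℝ := toIcoMod two_pi_pos 0 (x - y)

lemma cwDist_nonneg (x y : ℝ) : 0 ≤ cwDist x y := left_le_toIcoMod _ _ _

lemma cwDist_lt_two_pi (x y : ℝ) : cwDist x y < 2 * π := by
  simpa [cwDist] using toIcoMod_lt_right two_pi_pos 0 (x - y)

lemma cwDist_eq_iff {x y d : ℝ} :
    cwDist x y = d ↔ 0 ≤ d ∧ d < 2 * π ∧ ∃ z : ℤ, x - y = d + z * (2 * π) := by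
  simp [cwDist, toIcoMod_eq_iff, zsmul_eq_mul, and_assoc]

lemma cwDist_self (x : ℝ) : cwDist x x = 0 := by simp [cwDist]

lemma coe_eq_coe_iff {x y : ℝ} :
    (x : Circle2pi) = (y : Circle2pi) ↔ ∃ z : ℤ, x - y = z * (2 * π) := by
  rw [QuotientAddGroup.eq_iff_sub_mem, AddSubgroup.mem_zmultiples_iff]
  simp only [zsmul_eq_mul, eq_comm]

lemma coe_mem_arcSet_iff {s ℓ y : ℝ} (hℓ : ℓ < 2 * π) :
    (y : Circle2pi) ∈ arcSet s ℓ ↔ cwDist s y ≤ ℓ := by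
  constructor
  · rintro ⟨t, ⟨ht₀, htℓ⟩, hty⟩
    obtain ⟨z, hz⟩ := coe_eq_coe_iff.1 hty
    rw [(cwDist_eq_iff (d := t)).2 ⟨ht₀, htℓ.trans_lt hℓ, z, by linarith⟩]
    exact htℓ
  · intro h
    obtain ⟨-, -, z, hz⟩ := (cwDist_eq_iff (x := s) (y := y)).1 rfl
    exact ⟨cwDist s y, ⟨cwDist_nonneg s y, h⟩, coe_eq_coe_iff.2 ⟨z, by linarith⟩⟩

lemma arcSet_inter_nonempty_iff {s ℓ s' ℓ' : ℝ} (hℓ₀ : 0 ≤ ℓ) (hℓ : ℓ < 2 * π) (hℓ'₀ : 0 ≤ ℓ')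
    (hℓ' : ℓ' < 2 * π) :
    (arcSet s ℓ ∩ arcSet s' ℓ').Nonempty ↔ cwDist s s' ≤ ℓ ∨ cwDist s' s ≤ ℓ' := by
  constructor
  · rintro ⟨-, ⟨t, ⟨ht₀, htℓ⟩, rfl⟩, hmem'⟩
    have hr := (coe_mem_arcSet_iff hℓ').1 hmem'
    obtain ⟨-, hr₁, z, hz⟩ := (cwDist_eq_iff (x := s') (y := s - t)).1 rfl
    have hr₀ := cwDist_nonneg s' (s - t)
    set r := cwDist s' (s - t)
    rcases le_total r t with hrt | htr
    · left
      rw [(cwDist_eq_iff (d := t - r)).2 ⟨by linarith, by linarith, -z, by push_cast; linarith⟩]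
      linarith
    · right
      rw [(cwDist_eq_iff (d := r - t)).2 ⟨by linarith, by linarith, z, by linarith⟩]
      linarith
  · rintro (h | h)
    · exact ⟨s', (coe_mem_arcSet_iff hℓ).2 h,
        (coe_mem_arcSet_iff hℓ').2 ((cwDist_self s').trans_le hℓ'₀)⟩
    · exact ⟨s, (coe_mem_arcSet_iff hℓ).2 ((cwDist_self s).trans_le hℓ₀),
        (coe_mem_arcSet_iff hℓ').2 h⟩

lemma isCARep_iff {V : Type*} (G : SimpleGraph V) (f : V → ℝ × ℝ) :
    IsCARep G f ↔ (∀ v, 0 < (f v).2 ∧ (f v).2 < 2 * π) ∧ ∀ u v, u ≠ v →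
      (G.Adj u v ↔ cwDist (f u).1 (f v).1 ≤ (f u).2 ∨ cwDist (f v).1 (f u).1 ≤ (f v).2) := by
  refine and_congr_right fun hℓ => forall₂_congr fun u v => imp_congr_right fun _ => ?_
  rw [arcSet_inter_nonempty_iff (hℓ u).1.le (hℓ u).2 (hℓ v).1.le (hℓ v).2]

lemma cwDist_of_le {x y : ℝ} (h : cwDist 0 x ≤ cwDist 0 y) :
    cwDist x y = cwDist 0 y - cwDist 0 x := by
  obtain ⟨hx₀, hx₁, zx, hzx⟩ := (cwDist_eq_iff (x := 0) (y := x)).1 rfl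
  obtain ⟨hy₀, hy₁, zy, hzy⟩ := (cwDist_eq_iff (x := 0) (y := y)).1 rfl
  exact cwDist_eq_iff.2 ⟨by linarith, by linarith, zy - zx, by push_cast; linarith⟩

lemma cwDist_of_lt {x y : ℝ} (h : cwDist 0 y < cwDist 0 x) :
    cwDist x y = cwDist 0 y - cwDist 0 x + 2 * π := by
  obtain ⟨hx₀, hx₁, zx, hzx⟩ := (cwDist_eq_iff (x := 0) (y := x)).1 rfl
  obtain ⟨hy₀, hy₁, zy, hzy⟩ := (cwDist_eq_iff (x := 0) (y := y)).1 rfl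
  exact cwDist_eq_iff.2 ⟨by linarith, by linarith, zy - zx - 1, by push_cast; linarith⟩

lemma cwDist_eq_zero_iff {x y : ℝ} : cwDist x y = 0 ↔ (x : Circle2pi) = y := by
  simp [cwDist_eq_iff, coe_eq_coe_iff, pi_pos]

lemma exists_equivFin_lt_of_lt {V α : Type*} [Fintype V] [LinearOrder α] (e : V → α) :
    ∃ σ : V ≃ Fin (Fintype.card V), ∀ u v, e u < e v → σ u < σ v := by
  let _ : LinearOrder V := LinearOrder.lift' (fun v => toLex (e v, Fintype.equivFin V v))
    fun u v h => (Fintype.equivFin V).injective (congrArg (fun p => (ofLex p).2) h)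
  refine ⟨(Fintype.orderIsoFinOfCardEq V rfl).symm.toEquiv, fun u v h => ?_⟩
  exact (Fintype.orderIsoFinOfCardEq V rfl).symm.lt_iff_lt.2
    (Prod.Lex.toLex_lt_toLex.2 (Or.inl h))

section Reaches

variable {V : Type*} {n : ℕ}

/-- `u` reaches `v` when the arc `(s u, ℓ u)` contains the left endpoint of `v`; of two arcs
with the same left endpoint, only the one earlier in `σ` reaches the other. -/
def Reaches (σ : V → Fin n) (s ℓ : V → ℝ) (u v : V) : Prop :=
  cwDist (s u) (s v) ≤ ℓ u ∧ ((s u : Circle2pi) = s v → σ u ≤ σ v)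

lemma reaches_self {σ : V → Fin n} {s ℓ : V → ℝ} {u : V} (hℓ : 0 ≤ ℓ u) :
    Reaches σ s ℓ u u :=
  ⟨(cwDist_self _).trans_le hℓ, fun _ => le_rfl⟩

lemma reaches_or_reaches {σ : V → Fin n} {s ℓ : V → ℝ} {u v : V} (hℓ : 0 ≤ ℓ v)
    (h : cwDist (s u) (s v) ≤ ℓ u) : Reaches σ s ℓ u v ∨ Reaches σ s ℓ v u := by
  by_cases hσ : (s u : Circle2pi) = s v → σ u ≤ σ v
  · exact Or.inl ⟨h, hσ⟩
  · push Not at hσ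
    exact Or.inr ⟨(cwDist_eq_zero_iff.2 hσ.1.symm).trans_le hℓ, fun _ => hσ.2.le⟩

lemma Reaches.of_sub_le {σ : V → Fin n} {s ℓ : V → ℝ}
    (hσ : ∀ u v, cwDist 0 (s u) < cwDist 0 (s v) → σ u < σ v) {u v w : V}
    (hw : Reaches σ s ℓ u w) (hvw : σ v - σ u ≤ σ w - σ u) : Reaches σ s ℓ u v := by
  -- Along the cyclic order from `u`, `cwDist (s u)` is monotone except at the arcs sharing the
  -- left endpoint of `u` and preceding it in `σ`; these come last, and `u` reaches none of them.
  obtain ⟨hwℓ, hwσ⟩ := hw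
  have hmono : ∀ a b, σ a ≤ σ b → cwDist 0 (s a) ≤ cwDist 0 (s b) := fun a b h =>
    not_lt.1 fun h' => (hσ b a h').not_ge h
  have hlt_of_lt : σ w < σ u → cwDist 0 (s w) < cwDist 0 (s u) := by
    intro h
    refine (hmono w u h.le).lt_of_ne fun heq => (hwσ ?_).not_gt h
    exact cwDist_eq_zero_iff.1 (by rw [cwDist_of_le heq.ge, heq, sub_self])
  have hv₁ := cwDist_lt_two_pi 0 (s v)
  have hw₀ := cwDist_nonneg 0 (s w)
  rw [Fin.le_def] at hvw
  rcases le_or_gt (σ u) (σ v) with huv | hvu <;> rcases le_or_gt (σ u) (σ w) with huw | hwu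
  · rw [Fin.sub_val_of_le huv, Fin.sub_val_of_le huw] at hvw
    have hvw' := hmono v w (Fin.le_def.2 (by omega))
    rw [cwDist_of_le (hmono u w huw)] at hwℓ
    refine ⟨?_, fun _ => huv⟩
    rw [cwDist_of_le (hmono u v huv)]
    linarith
  · rw [cwDist_of_lt (hlt_of_lt hwu)] at hwℓ
    refine ⟨?_, fun _ => huv⟩
    rw [cwDist_of_le (hmono u v huv)]
    linarith
  · rw [Fin.sub_val_of_le huw, Fin.coe_sub_iff_lt.2 hvu] at hvw
    omega
  · rw [Fin.coe_sub_iff_lt.2 hvu, Fin.coe_sub_iff_lt.2 hwu] at hvw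
    have hvw' := hmono v w (Fin.le_def.2 (by omega))
    have hwu' := hlt_of_lt hwu
    rw [cwDist_of_lt hwu'] at hwℓ
    have hvu' : cwDist (s u) (s v) = cwDist 0 (s v) - cwDist 0 (s u) + 2 * π :=
      cwDist_of_lt (hvw'.trans_lt hwu')
    refine ⟨by linarith, fun htie => ?_⟩
    linarith [cwDist_eq_zero_iff.2 htie, cwDist_nonneg 0 (s v), cwDist_lt_two_pi 0 (s u)]

end Reaches

lemma exists_le_iff_of_forall_le_imp {ι α : Type*} [Finite ι] [LinearOrder α] (f : ι → α)
    {p : ι → Prop} (hne : ∃ i, p i) (hp : ∀ i j, p j → f i ≤ f j → p i) :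
    ∃ a, ∀ i, f i ≤ a ↔ p i := by
  obtain ⟨j, hj, hmax⟩ := (Set.toFinite {i | p i}).exists_maximalFor f _ hne
  exact ⟨f j, fun i => ⟨fun hi => hp i j hj hi, fun hi => (le_total _ _).elim id (hmax hi)⟩⟩

theorem exists_cyclic_threshold {V : Type*} [Fintype V] (G : SimpleGraph V) {s ℓ : V → ℝ}
    (hℓ : ∀ v, 0 ≤ ℓ v)
    (hadj : ∀ u v, u ≠ v → (G.Adj u v ↔ cwDist (s u) (s v) ≤ ℓ u ∨ cwDist (s v) (s u) ≤ ℓ v)) :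
    ∃ (σ : V ≃ Fin (Fintype.card V)) (m : V → Fin (Fintype.card V)),
      ∀ u v, u ≠ v → (G.Adj u v ↔ σ v - σ u ≤ m u ∨ σ u - σ v ≤ m v) := by
  obtain ⟨σ, hσ⟩ := exists_equivFin_lt_of_lt fun v => cwDist 0 (s v)
  choose m hm using fun u => exists_le_iff_of_forall_le_imp (fun v => σ v - σ u)
    ⟨u, reaches_self (hℓ u)⟩ fun v w hw hvw => Reaches.of_sub_le (σ := σ) (ℓ := ℓ) hσ hw hvw
  refine ⟨σ, m, fun u v huv => ?_⟩
  rw [hadj u v huv, hm, hm]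
  constructor
  · rintro (h | h)
    · exact reaches_or_reaches (hℓ v) h
    · exact (reaches_or_reaches (hℓ u) h).symm
  · rintro (h | h)
    exacts [Or.inl h.1, Or.inr h.1]

/-- The length puts the right endpoint strictly between the left endpoints `k` and `k + 1` steps
further on, at an offset depending on `i`, so that all endpoints are distinct. -/
def uniformArc (n : ℕ) (θ₀ : ℝ) (i k : Fin n) : ℝ × ℝ :=
  (θ₀ - 2 * π * i / n, 2 * π * k / n + 2 * π * (i + 1) / (n * (n + 1)))

section UniformArc

variable {n : ℕ} (θ₀ : ℝ)

lemma cwDist_uniformArc_fst (i k j l : Fin n) :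
    cwDist (uniformArc n θ₀ i k).1 (uniformArc n θ₀ j l).1 = 2 * π * ((j - i : Fin n) : ℕ) / n := by
  have hn : (0 : ℝ) < n := by exact_mod_cast i.pos
  have hr : (((j - i : Fin n) : ℕ) : ℝ) < n := by exact_mod_cast (j - i).isLt
  refine cwDist_eq_iff.2
    ⟨by positivity, by rwa [div_lt_iff₀ hn, mul_lt_mul_iff_right₀ two_pi_pos], ?_⟩
  rcases le_or_gt i j with hij | hji
  · refine ⟨0, ?_⟩
    rw [Fin.sub_val_of_le hij, Nat.cast_sub hij]
    simp only [uniformArc]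
    ring
  · refine ⟨-1, ?_⟩
    rw [Fin.coe_sub_iff_lt.2 hji, Nat.cast_sub (by omega), Nat.cast_add]
    simp only [uniformArc]
    field_simp
    push_cast
    ring

lemma uniformArc_snd_pos (i k : Fin n) : 0 < (uniformArc n θ₀ i k).2 := by
  have hn : (0 : ℝ) < n := by exact_mod_cast i.pos
  simp only [uniformArc]
  positivity

lemma uniformArc_snd_lt (i k : Fin n) :
    (uniformArc n θ₀ i k).2 < 2 * π * (k + 1) / n := by
  have hn : (0 : ℝ) < n := by exact_mod_cast i.pos
  have hi : (i : ℝ) + 1 ≤ n := by exact_mod_cast i.isLt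
  simp only [uniformArc]
  rw [show 2 * π * (k + 1) / n = 2 * π * k / n + 2 * π / n by ring, add_lt_add_iff_left,
    div_lt_div_iff₀ (by positivity) hn]
  have h : ((i : ℝ) + 1) * n < n * (n + 1) := by nlinarith
  nlinarith [mul_lt_mul_of_pos_left h two_pi_pos]

lemma uniformArc_snd_lt_two_pi (i k : Fin n) : (uniformArc n θ₀ i k).2 < 2 * π := by
  have hn : (0 : ℝ) < n := by exact_mod_cast i.pos
  have hk : (k : ℝ) + 1 ≤ n := by exact_mod_cast k.isLt
  calc (uniformArc n θ₀ i k).2 < 2 * π * (k + 1) / n := uniformArc_snd_lt θ₀ i k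
    _ ≤ 2 * π := by rw [div_le_iff₀ hn]; nlinarith [two_pi_pos]

lemma cwDist_uniformArc_le_iff (i k j l : Fin n) :
    cwDist (uniformArc n θ₀ i k).1 (uniformArc n θ₀ j l).1 ≤ (uniformArc n θ₀ i k).2 ↔
      j - i ≤ k := by
  have hn : (0 : ℝ) < n := by exact_mod_cast i.pos
  rw [cwDist_uniformArc_fst, Fin.le_def]
  constructor
  · intro h
    by_contra! hlt
    have hlt' : (k : ℝ) + 1 ≤ ((j - i : Fin n) : ℕ) := by exact_mod_cast hlt
    have := h.trans_lt (uniformArc_snd_lt θ₀ i k)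
    rw [div_lt_div_iff_of_pos_right hn, mul_lt_mul_iff_right₀ two_pi_pos] at this
    linarith
  · intro h
    have h' : (((j - i : Fin n) : ℕ) : ℝ) ≤ k := by exact_mod_cast h
    simp only [uniformArc]
    have : 0 < 2 * π * ((i : ℝ) + 1) / (n * (n + 1)) := by positivity
    have : 2 * π * ((j - i : Fin n) : ℕ) / n ≤ 2 * π * k / n := by gcongr
    linarith

lemma isCARep_uniformArc {V : Type*} (G : SimpleGraph V) (σ m : V → Fin n)
    (hadj : ∀ u v, u ≠ v → (G.Adj u v ↔ σ v - σ u ≤ m u ∨ σ u - σ v ≤ m v)) :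
    IsCARep G fun v => uniformArc n θ₀ (σ v) (m v) := by
  refine (isCARep_iff G _).2
    ⟨fun v => ⟨uniformArc_snd_pos θ₀ _ _, uniformArc_snd_lt_two_pi θ₀ _ _⟩, fun u v huv => ?_⟩
  rw [hadj u v huv, cwDist_uniformArc_le_iff, cwDist_uniformArc_le_iff]

end UniformArc

lemma Nat.eq_and_modEq_of_mul_add_modEq {n a a' b b' : ℕ} (hb : b ≤ n) (hb' : b' ≤ n)
    (h : (n + 1) * a + b ≡ (n + 1) * a' + b' [MOD (n + 1) * n]) : b = b' ∧ a ≡ a' [MOD n] := by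
  have hbb' : b = b' := by
    have h' := h.of_mul_right n
    rw [Nat.modulus_mul_add_modEq_iff, Nat.ModEq.comm, Nat.modulus_mul_add_modEq_iff] at h'
    exact (h'.eq_of_lt_of_lt (by omega) (by omega)).symm
  subst hbb'
  exact ⟨rfl, Nat.ModEq.mul_left_cancel' (by omega) (Nat.ModEq.add_right_cancel' b h)⟩

def arcEndpoint (a : ℝ × ℝ) (b : Bool) : Circle2pi :=
  if b then (a.1 : Circle2pi) else ((a.1 - a.2 : ℝ) : Circle2pi)

/-- The endpoints of `uniformArc n θ₀ i k` are `θ₀ - 2π E / ((n+1)n)` for these `E`, whose residue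
mod `n + 1` is `0` at the left endpoint and `i + 1` at the right one. -/
def uniformArcEndpointIndex (n : ℕ) (i k : Fin n) : Bool → ℕ
  | true => (n + 1) * i + 0
  | false => (n + 1) * (i + k) + (i + 1)

lemma arcEndpoint_uniformArc {n : ℕ} (θ₀ : ℝ) (i k : Fin n) (b : Bool) :
    arcEndpoint (uniformArc n θ₀ i k) b =
      ((θ₀ - 2 * π * uniformArcEndpointIndex n i k b / ((n + 1) * n : ℕ) : ℝ) : Circle2pi) := by
  have hn : (0 : ℝ) < n := by exact_mod_cast i.pos
  cases b <;> simp only [arcEndpoint, uniformArc, uniformArcEndpointIndex, if_true,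
    Bool.false_eq_true, if_false] <;> congr 1 <;>
    push_cast <;> field_simp <;> ring

lemma modEq_of_coe_sub_div_eq {N A B : ℕ} {θ₀ : ℝ} (hN : 0 < N)
    (h : ((θ₀ - 2 * π * A / N : ℝ) : Circle2pi) = ((θ₀ - 2 * π * B / N : ℝ) : Circle2pi)) :
    A ≡ B [MOD N] := by
  obtain ⟨z, hz⟩ := coe_eq_coe_iff.1 h
  have hN' : (N : ℝ) ≠ 0 := by positivity
  have hBA : ((B : ℤ) - A : ℝ) = (N * z : ℤ) := by
    field_simp at hz
    push_cast
    nlinarith [pi_pos]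
  exact Int.natCast_modEq_iff.1 (Int.modEq_iff_dvd.2 ⟨z, by exact_mod_cast hBA⟩)

lemma uniformArcEndpointIndex_modEq {n : ℕ} {i k j l : Fin n} {b b' : Bool}
    (h : uniformArcEndpointIndex n i k b ≡ uniformArcEndpointIndex n j l b' [MOD (n + 1) * n]) :
    i = j ∧ b = b' := by
  have hi := i.isLt
  have hj := j.isLt
  cases b <;> cases b' <;> simp only [uniformArcEndpointIndex] at h <;>
    obtain ⟨hres, hquot⟩ := Nat.eq_and_modEq_of_mul_add_modEq (by omega) (by omega) h
  · exact ⟨Fin.ext (by omega), rfl⟩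
  · cases hres
  · cases hres
  · exact ⟨Fin.ext (hquot.eq_of_lt_of_lt hi hj), rfl⟩

lemma arcEndpoint_uniformArc_injective {n : ℕ} (θ₀ : ℝ) {i k j l : Fin n} {b b' : Bool}
    (h : arcEndpoint (uniformArc n θ₀ i k) b = arcEndpoint (uniformArc n θ₀ j l) b') :
    i = j ∧ b = b' := by
  rw [arcEndpoint_uniformArc, arcEndpoint_uniformArc] at h
  exact uniformArcEndpointIndex_modEq (modEq_of_coe_sub_div_eq (by have := i.pos; positivity) h)

lemma exists_forall_sub_ne_rat_mul {T : Set ℝ} (hT : T.Countable) (c : ℝ) :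
    ∃ θ₀, ∀ θ ∈ T, ∀ q : ℚ, θ₀ - θ ≠ q * c := by
  have hbad : (⋃ θ ∈ T, Set.range fun q : ℚ => θ + q * c).Countable :=
    hT.biUnion fun θ _ => Set.countable_range _
  obtain ⟨θ₀, hθ₀⟩ := (hbad.dense_compl ℝ).nonempty
  exact ⟨θ₀, fun θ hθ q hq => hθ₀ (Set.mem_biUnion hθ ⟨q, by linarith⟩)⟩

lemma coe_add_rat_mul_pi_ne {θ₀ θ : ℝ} (h : ∀ q : ℚ, θ₀ - θ ≠ q * π) (q : ℚ) :
    ((θ₀ + q * π : ℝ) : Circle2pi) ≠ θ ∧ ((θ₀ + q * π : ℝ) : Circle2pi) ≠ (θ + π : ℝ) := by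
  constructor <;> intro heq <;> obtain ⟨z, hz⟩ := coe_eq_coe_iff.1 heq
  · exact h (2 * z - q) (by push_cast; linarith)
  · exact h (2 * z - q + 1) (by push_cast; linarith)

lemma arcEndpoint_uniformArc_ne {n : ℕ} {θ₀ θ : ℝ} (h : ∀ q : ℚ, θ₀ - θ ≠ q * π) (i k : Fin n)
    (b : Bool) : arcEndpoint (uniformArc n θ₀ i k) b ≠ θ ∧
      arcEndpoint (uniformArc n θ₀ i k) b ≠ (θ + π : ℝ) := by
  have := coe_add_rat_mul_pi_ne h (-2 * uniformArcEndpointIndex n i k b / ((n + 1) * n))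
  rw [arcEndpoint_uniformArc]
  convert this using 3 <;> push_cast <;> ring

theorem stmt1_general {V : Type*} [Fintype V] (G : SimpleGraph V)
    (hrep : ∃ f : V → ℝ × ℝ, IsCARep G f) (T : Finset ℝ) :
    ∃ f : V → ℝ × ℝ, IsCARep G f ∧
      -- (1) all 2n endpoints (left endpoints and right endpoints) are distinct
      (Function.Injective (fun x : V × Bool =>
        if x.2 then (((f x.1).1 : ℝ) : Circle2pi)
        else (((f x.1).1 - (f x.1).2 : ℝ) : Circle2pi))) ∧
      -- (2) left endpoints uniformly spaced: 2π/n apart in clockwise order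
      (∃ (θ₀ : ℝ) (σ : V ≃ Fin (Fintype.card V)), ∀ v : V,
        (((f v).1 : ℝ) : Circle2pi) =
          ((θ₀ - 2 * Real.pi * ((σ v : ℕ) : ℝ) / (Fintype.card V : ℝ) : ℝ) : Circle2pi)) ∧
      -- (3) no endpoint on a reference line at angle θ ∈ T (which meets the circle
      -- at the angles θ and θ + π)
      (∀ θ ∈ T, ∀ v : V, ∀ e ∈ ({(((f v).1 : ℝ) : Circle2pi),
          (((f v).1 - (f v).2 : ℝ) : Circle2pi)} : Set Circle2pi),
        e ≠ ((θ : ℝ) : Circle2pi) ∧ e ≠ ((θ + Real.pi : ℝ) : Circle2pi)) := by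
  obtain ⟨f₀, hf₀⟩ := hrep
  obtain ⟨hℓ, hadj⟩ := (isCARep_iff G f₀).1 hf₀
  obtain ⟨σ, m, hσm⟩ := exists_cyclic_threshold G (fun v => (hℓ v).1.le) hadj
  obtain ⟨θ₀, hθ₀⟩ := exists_forall_sub_ne_rat_mul T.countable_toSet π
  refine ⟨fun v => uniformArc _ θ₀ (σ v) (m v), isCARep_uniformArc θ₀ G σ m hσm, ?_,
    ⟨θ₀, σ, fun v => rfl⟩, ?_⟩
  · rintro ⟨u, b⟩ ⟨v, b'⟩ h
    obtain ⟨huv, rfl⟩ := arcEndpoint_uniformArc_injective θ₀ h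
    exact Prod.ext (σ.injective huv) rfl
  · rintro θ hθ v e (rfl | rfl)
    exacts [arcEndpoint_uniformArc_ne (hθ₀ θ hθ) (σ v) (m v) true,
      arcEndpoint_uniformArc_ne (hθ₀ θ hθ) (σ v) (m v) false]

/-- every circular arc graph on `n ≥ 2` vertices has a representation with
all `2n` endpoints distinct, left endpoints uniformly spaced at angular distance `2π/n`
(clockwise), and no endpoint on any of a prescribed finite set of reference lines
through the center. -/
theorem stmt1 {V : Type*} [Fintype V] (G : SimpleGraph V)
    (hn : 2 ≤ Fintype.card V) (hrep : ∃ f : V → ℝ × ℝ, IsCARep G f) (T : Finset ℝ) :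
    ∃ f : V → ℝ × ℝ, IsCARep G f ∧
      -- (1) all 2n endpoints (left endpoints and right endpoints) are distinct
      (Function.Injective (fun x : V × Bool =>
        if x.2 then (((f x.1).1 : ℝ) : Circle2pi)
        else (((f x.1).1 - (f x.1).2 : ℝ) : Circle2pi))) ∧
      -- (2) left endpoints uniformly spaced: 2π/n apart in clockwise order
      (∃ (θ₀ : ℝ) (σ : V ≃ Fin (Fintype.card V)), ∀ v : V,
        (((f v).1 : ℝ) : Circle2pi) =
          ((θ₀ - 2 * Real.pi * ((σ v : ℕ) : ℝ) / (Fintype.card V : ℝ) : ℝ) : Circle2pi)) ∧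
      -- (3) no endpoint on a reference line at angle θ ∈ T (which meets the circle
      -- at the angles θ and θ + π)
      (∀ θ ∈ T, ∀ v : V, ∀ e ∈ ({(((f v).1 : ℝ) : Circle2pi),
          (((f v).1 - (f v).2 : ℝ) : Circle2pi)} : Set Circle2pi),
        e ≠ ((θ : ℝ) : Circle2pi) ∧ e ≠ ((θ + Real.pi : ℝ) : Circle2pi)) :=
  stmt1_general G hrep T

end
end

section
/- Let u and v be disjoint arcs on the unit circle with length(u) ≤ length(v), suppose u crosses at least 2 of the 2α reference half-axes with |Int(u)| even, and normalize so the median half-axis of u is the positive x-axis. If v intersects the reflection of u across the x-axis (axis A_0), then v contains the right endpoint of that reflected arc (v is anticlockwise adjacent to Im_0(u)); and if v intersects the reflection of u across the axis A_1 at angle π/α, then v contains the left endpoint of that reflected arc (v is clockwise adjacent to Im_1(u)). -/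
noncomputable section

/-!
Both reflected arcs overlap `u`: `Im_0(u)` sticks out of `u` only beyond its right end, by
`2 su - ℓu`, and `Im_1(u)` only beyond its left end, by `2π/α - 2 su + ℓu`; the normalization
makes both overhangs shorter than `u`, hence than `v`. An arc `v` disjoint from `u` that meets
such an overhang cannot fit inside it, and cannot extend back into `u`, so it must run past the
far endpoint of the reflected arc.
-/

open Real

lemma coe_mem_arcSet_iff_s9 {s ℓ y : ℝ} :
    (y : Circle2pi) ∈ arcSet s ℓ ↔ ∃ k : ℤ, y + k * (2 * π) ∈ Set.Icc (s - ℓ) s := by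
  constructor
  · rintro ⟨t, ⟨ht0, htℓ⟩, hty : ((s - t : ℝ) : Circle2pi) = y⟩
    obtain ⟨k, hk⟩ := (AddCircle.coe_eq_zero_iff (2 * π)).1
      (by rw [AddCircle.coe_sub, hty, sub_self] : ((s - t - y : ℝ) : Circle2pi) = 0)
    rw [zsmul_eq_mul] at hk
    exact ⟨k, by constructor <;> linarith⟩
  · rintro ⟨k, hk1, hk2⟩
    refine ⟨s - (y + k * (2 * π)), ⟨by linarith, by linarith⟩, ?_⟩
    show ((s - (s - (y + k * (2 * π))) : ℝ) : Circle2pi) = y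
    rw [sub_sub_cancel, AddCircle.coe_add, (AddCircle.coe_eq_zero_iff _).2 ⟨k, zsmul_eq_mul _ _⟩,
      add_zero]

lemma coe_mem_arcSet {s ℓ y : ℝ} (h : y ∈ Set.Icc (s - ℓ) s) : (y : Circle2pi) ∈ arcSet s ℓ :=
  coe_mem_arcSet_iff_s9.2 ⟨0, by simpa using h⟩

lemma reflMap_image_arcSet (θ s ℓ : ℝ) :
    reflMap θ '' arcSet s ℓ = arcSet (2 * θ - s + ℓ) ℓ := by
  have hIcc : (fun t => ℓ - t) '' Set.Icc 0 ℓ = Set.Icc 0 ℓ := by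
    simp [Set.image_const_sub_Icc]
  rw [arcSet, arcSet, Set.image_image]
  conv_rhs => rw [← hIcc, Set.image_image]
  congr 1
  funext t
  simp only [reflMap, ← AddCircle.coe_sub]
  congr 1
  ring

lemma left_mem_arcSet_of_inter_nonempty {su ℓu sv ℓv s ℓ : ℝ}
    (hdisj : Disjoint (arcSet su ℓu) (arcSet sv ℓv)) (hℓu : 0 ≤ ℓu)
    (hoverlap : su - ℓu ≤ s - ℓ) (hshort : s - su < ℓv)
    (hmeet : (arcSet sv ℓv ∩ arcSet s ℓ).Nonempty) : (s : Circle2pi) ∈ arcSet sv ℓv := by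
  obtain ⟨x, hxv, t, ⟨ht0, htℓ⟩, rfl⟩ := hmeet
  obtain ⟨k, hk1, hk2⟩ := coe_mem_arcSet_iff_s9.1 hxv
  have hbeyond : su < s - t := by
    by_contra! h
    exact hdisj.ne_of_mem (coe_mem_arcSet ⟨by linarith, h⟩) hxv rfl
  refine coe_mem_arcSet_iff_s9.2 ⟨k, by linarith, ?_⟩
  by_contra! h
  exact hdisj.ne_of_mem (coe_mem_arcSet ⟨by linarith, le_rfl⟩)
    (coe_mem_arcSet_iff_s9.2 ⟨k, by linarith, by linarith⟩) rfl

lemma right_mem_arcSet_of_inter_nonempty {su ℓu sv ℓv s ℓ : ℝ}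
    (hdisj : Disjoint (arcSet su ℓu) (arcSet sv ℓv)) (hℓu : 0 ≤ ℓu)
    (hoverlap : s ≤ su) (hshort : su - ℓu - (s - ℓ) < ℓv)
    (hmeet : (arcSet sv ℓv ∩ arcSet s ℓ).Nonempty) :
    ((s - ℓ : ℝ) : Circle2pi) ∈ arcSet sv ℓv := by
  obtain ⟨x, hxv, t, ⟨ht0, htℓ⟩, rfl⟩ := hmeet
  obtain ⟨k, hk1, hk2⟩ := coe_mem_arcSet_iff_s9.1 hxv
  have hbeyond : s - t < su - ℓu := by
    by_contra! h
    exact hdisj.ne_of_mem (coe_mem_arcSet ⟨h, by linarith⟩) hxv rfl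
  refine coe_mem_arcSet_iff_s9.2 ⟨k, ?_, by linarith⟩
  by_contra! h
  exact hdisj.ne_of_mem (coe_mem_arcSet ⟨le_rfl, by linarith⟩)
    (coe_mem_arcSet_iff_s9.2 ⟨k, by linarith, by linarith⟩) rfl

theorem stmt9_general (α p : ℕ) (hp : 1 ≤ p)
    (su ℓu sv ℓv : ℝ) (h0u : 0 < ℓu)
    (hlen : ℓu ≤ ℓv)
    (hdisj : arcSet su ℓu ∩ arcSet sv ℓv = ∅)
    (hhead : Real.pi * (p : ℝ) / (α : ℝ) < su ∧ su < Real.pi * ((p : ℝ) + 1) / (α : ℝ))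
    (htail : -(Real.pi * (p : ℝ) / (α : ℝ)) < su - ℓu ∧
      su - ℓu < -(Real.pi * ((p : ℝ) - 1) / (α : ℝ))) :
    ((arcSet sv ℓv ∩ reflMap 0 '' arcSet su ℓu).Nonempty →
      ((-su : ℝ) : Circle2pi) ∈ arcSet sv ℓv) ∧
    ((arcSet sv ℓv ∩ reflMap (Real.pi / (α : ℝ)) '' arcSet su ℓu).Nonempty →
      ((2 * Real.pi / (α : ℝ) - (su - ℓu) : ℝ) : Circle2pi) ∈ arcSet sv ℓv) := by
  have hdisj' := Set.disjoint_iff_inter_eq_empty.2 hdisj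
  have hsub_nonneg : 0 ≤ π * ((p : ℝ) - 1) / α := by
    have : (1 : ℝ) ≤ p := by exact_mod_cast hp
    positivity
  have hsplit_sub : π * ((p : ℝ) - 1) / α = π * p / α - π / α := by ring
  have hsplit_add : π * ((p : ℝ) + 1) / α = π * p / α + π / α := by ring
  constructor
  · intro hmeet
    rw [reflMap_image_arcSet] at hmeet
    simpa using right_mem_arcSet_of_inter_nonempty hdisj' h0u.le (by linarith) (by linarith) hmeet
  · intro hmeet
    rw [reflMap_image_arcSet] at hmeet
    convert left_mem_arcSet_of_inter_nonempty hdisj' h0u.le (by linarith) (by linarith) hmeet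
      using 2
    ring

/-- Let `u`, `v` be disjoint arcs, `len(u) ≤ len(v) < π(α−1)/α`, where `u`
crosses an even number `2p ≥ 2` of half-axes with median half-axis the positive x-axis.
This normalization means the left endpoint `su` of `u` lies in `S_p` (angle in
`(πp/α, π(p+1)/α)`) and its right endpoint `su − ℓu` lies in `S_{−p}` (angle in
`(−πp/α, −π(p−1)/α)`).  If `v` meets `Im_0(u)` then `v` contains the right endpoint
`−su` of `Im_0(u)` (anticlockwise adjacency); if `v` meets `Im_1(u)` (reflection across
the axis at angle `π/α`) then `v` contains the left endpoint `2π/α − (su − ℓu)` of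
`Im_1(u)` (clockwise adjacency). -/
theorem stmt9 (α p : ℕ) (hα : 2 ≤ α) (hp : 1 ≤ p)
    (su ℓu sv ℓv : ℝ) (h0u : 0 < ℓu) (h0v : 0 < ℓv)
    (hlen : ℓu ≤ ℓv) (hv : ℓv < Real.pi * ((α : ℝ) - 1) / (α : ℝ))
    (hdisj : arcSet su ℓu ∩ arcSet sv ℓv = ∅)
    (hhead : Real.pi * (p : ℝ) / (α : ℝ) < su ∧ su < Real.pi * ((p : ℝ) + 1) / (α : ℝ))
    (htail : -(Real.pi * (p : ℝ) / (α : ℝ)) < su - ℓu ∧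
      su - ℓu < -(Real.pi * ((p : ℝ) - 1) / (α : ℝ))) :
    ((arcSet sv ℓv ∩ reflMap 0 '' arcSet su ℓu).Nonempty →
      ((-su : ℝ) : Circle2pi) ∈ arcSet sv ℓv) ∧
    ((arcSet sv ℓv ∩ reflMap (Real.pi / (α : ℝ)) '' arcSet su ℓu).Nonempty →
      ((2 * Real.pi / (α : ℝ) - (su - ℓu) : ℝ) : Circle2pi) ∈ arcSet sv ℓv) :=
  stmt9_general α p hp su ℓu sv ℓv h0u hlen hdisj hhead htail

end
end

section
/- Let G be a circular arc graph on n vertices with maximum degree Δ. If Δ < ⌊n(α−1)/(2α)⌋ for some integer α ≥ 2, then the boxicity of G is at most α; i.e., G is the intersection of α interval graphs on the same vertex set. -/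
noncomputable section

/-!
Lift the arcs to intervals `[a v, b v]` of `ℝ`, two arcs meeting iff some translate of one
interval by `2πℤ` meets the other. Sending each point to `π / n` times the number of arc endpoints
before it is monotone, commutes with translation by `2π` and is strictly increasing right after
each endpoint, so it yields a model of the same graph in which the length of an arc is `π / n`
times the number of endpoints in `[a v, b v)`. These are its own left endpoint and endpoints of
neighbours, so the length is at most `π (2 deg v + 1) / n`, and the degree bound makes any two
arcs shorter than `2π - 2π / α` in total. Two disjoint arcs thus leave gaps of total length more
than `2π / α`, so some chord across both gaps is orthogonal to one of the directions `π i / α`,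
`i < α`, and the projections `x ↦ cos (x - π i / α)` of the arcs give `α` interval graphs whose
intersection is `G`.
-/

open Real Set

namespace CircularArc

/-- The closed arcs of `ℝ ⧸ Tℤ` lifted to `[a, b]` and `[a', b']` meet. -/
def ArcsMeet (T a b a' b' : ℝ) : Prop := ∃ k : ℤ, a ≤ b' + k * T ∧ a' + k * T ≤ b

structure IsArcModel {V : Type*} (T : ℝ) (G : SimpleGraph V) (a b : V → ℝ) : Prop where
  le : ∀ v, a v ≤ b v
  adj_iff : ∀ u v, u ≠ v → (G.Adj u v ↔ ArcsMeet T (a u) (b u) (a v) (b v))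

section ArcsMeet

variable {T a b a' b' : ℝ}

theorem ArcsMeet.exists_eq_add_int_mul (h : ArcsMeet T a b a' b') (hab : a ≤ b) (hab' : a' ≤ b') :
    ∃ x ∈ Icc a b, ∃ y ∈ Icc a' b', ∃ k : ℤ, x = y + k * T := by
  obtain ⟨k, h₁, h₂⟩ := h
  refine ⟨max a (a' + k * T), ⟨le_max_left _ _, max_le hab h₂⟩,
    max a (a' + k * T) - k * T, ⟨?_, ?_⟩, k, by ring⟩
  · linarith [le_max_right a (a' + k * T)]
  · have := max_le h₁ (by linarith : a' + k * T ≤ b' + k * T)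
    linarith

theorem exists_int_of_not_arcsMeet (hT : 0 < T) (h : ¬ArcsMeet T a b a' b') :
    ∃ k : ℤ, b < a' + k * T ∧ b' + k * T < a + T := by
  let k := ⌈(a - b') / T⌉
  have hk : a ≤ b' + k * T := by
    have := Int.le_ceil ((a - b') / T)
    rw [div_le_iff₀ hT] at this
    linarith
  refine ⟨k, lt_of_not_ge fun hb => h ⟨k, hk, hb⟩, ?_⟩
  have := Int.ceil_lt_add_one ((a - b') / T)
  rw [← sub_lt_iff_lt_add, lt_div_iff₀ hT] at this
  linarith

end ArcsMeet

theorem coe_eq_coe_iff_exists_int {p x y : ℝ} :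
    (x : AddCircle p) = y ↔ ∃ k : ℤ, x = y + k * p := by
  rw [← sub_eq_zero, ← AddCircle.coe_sub, AddCircle.coe_eq_zero_iff]
  refine exists_congr fun k => ?_
  rw [zsmul_eq_mul]
  constructor <;> intro h <;> linarith

theorem arcSet_inter_nonempty_iff {s ℓ s' ℓ' : ℝ} (hℓ : 0 ≤ ℓ) (hℓ' : 0 ≤ ℓ') :
    (arcSet s ℓ ∩ arcSet s' ℓ').Nonempty ↔ ArcsMeet (2 * π) (s - ℓ) s (s' - ℓ') s' := by
  constructor
  · rintro ⟨_, ⟨t, ht, rfl⟩, t', ht', hz⟩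
    obtain ⟨k, hk⟩ := coe_eq_coe_iff_exists_int.1 hz
    exact ⟨-k, by push_cast; linarith [ht.2, ht'.1], by push_cast; linarith [ht.1, ht'.2]⟩
  · rintro ⟨k, h₁, h₂⟩
    set z := max (s - ℓ) (s' - ℓ' + k * (2 * π))
    have hz₁ := le_max_left (s - ℓ) (s' - ℓ' + k * (2 * π))
    have hz₂ := le_max_right (s - ℓ) (s' - ℓ' + k * (2 * π))
    have hzs : z ≤ s := max_le (by linarith) h₂
    have hzs' : z ≤ s' + k * (2 * π) := max_le h₁ (by linarith)
    refine ⟨z, ⟨s - z, ⟨by linarith, by linarith⟩, by simp⟩,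
      s' + k * (2 * π) - z, ⟨by linarith, by linarith⟩, ?_⟩
    exact coe_eq_coe_iff_exists_int.2 ⟨-k, by push_cast; ring⟩

theorem _root_.IsCARep.isArcModel {V : Type*} {G : SimpleGraph V} {f : V → ℝ × ℝ}
    (hf : IsCARep G f) :
    IsArcModel (2 * π) G (fun v => (f v).1 - (f v).2) (fun v => (f v).1) :=
  ⟨fun v => by linarith [(hf.1 v).1], fun u v huv =>
    (hf.2 u v huv).trans (arcSet_inter_nonempty_iff (hf.1 u).1.le (hf.1 v).1.le)⟩

section periodicRank

variable {ι : Type*} [Fintype ι] {T : ℝ}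

/-- `⌈(x - p i) / T⌉` counts the points of `p i + Tℤ` in `[p i, x)`, so `periodicRank T p`
lifts a monotone degree-one map of `ℝ ⧸ Tℤ` that moves the points `p i` onto `(T / |ι|) ℤ`,
keeping distinct ones distinct. -/
def periodicRank (T : ℝ) (p : ι → ℝ) (x : ℝ) : ℝ :=
  T / Fintype.card ι * ∑ i, (⌈(x - p i) / T⌉ : ℝ)

theorem periodicRank_mono (hT : 0 < T) (p : ι → ℝ) : Monotone (periodicRank T p) := by
  intro x y hxy
  unfold periodicRank
  gcongr

theorem periodicRank_add_int_mul [Nonempty ι] (hT : T ≠ 0) (p : ι → ℝ) (x : ℝ) (k : ℤ) :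
    periodicRank T p (x + k * T) = periodicRank T p x + k * T := by
  have hshift : ∀ i, (x + k * T - p i) / T = (x - p i) / T + k := fun i => by
    field_simp
    ring
  simp only [periodicRank, hshift, Int.ceil_add_intCast, Int.cast_add, Finset.sum_add_distrib,
    Finset.sum_const, Finset.card_univ, nsmul_eq_mul]
  field_simp

theorem periodicRank_lt_of_lt (hT : 0 < T) (p : ι → ℝ) (i : ι) {y : ℝ} (h : p i < y) :
    periodicRank T p (p i) < periodicRank T p y := by
  have : Nonempty ι := ⟨i⟩
  refine mul_lt_mul_of_pos_left (Finset.sum_lt_sum (fun j _ => ?_) ⟨i, Finset.mem_univ _, ?_⟩)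
    (by positivity)
  · exact_mod_cast Int.ceil_le_ceil (by gcongr : (p i - p j) / T ≤ (y - p j) / T)
  · rw [sub_self, zero_div, Int.ceil_zero, Int.cast_zero, Int.cast_pos, Int.ceil_pos]
    exact div_pos (by linarith) hT

theorem ceil_div_le_ceil_div_add_one (hT : 0 < T) {x y : ℝ} (hy : y ≤ x + T) (q : ℝ) :
    ⌈(y - q) / T⌉ ≤ ⌈(x - q) / T⌉ + 1 := by
  rw [← Int.ceil_add_one]
  refine Int.ceil_le_ceil ?_
  rw [div_add_one hT.ne']
  gcongr
  linarith

theorem exists_add_int_mul_mem_Ico_of_ceil_lt (hT : 0 < T) {x y q : ℝ}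
    (h : ⌈(x - q) / T⌉ < ⌈(y - q) / T⌉) : ∃ k : ℤ, q + k * T ∈ Ico x y := by
  refine ⟨⌈(x - q) / T⌉, ?_, ?_⟩
  · have := Int.le_ceil ((x - q) / T)
    rw [div_le_iff₀ hT] at this
    linarith
  · have := Int.lt_ceil.1 h
    rw [lt_div_iff₀ hT] at this
    linarith

theorem periodicRank_sub_le (hT : 0 < T) (p : ι → ℝ) {x y : ℝ} (hy : y ≤ x + T) :
    periodicRank T p y - periodicRank T p x ≤
      T / Fintype.card ι * {i | ∃ k : ℤ, p i + k * T ∈ Ico x y}.ncard := by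
  classical
  rw [periodicRank, periodicRank, ← mul_sub, ← Finset.sum_sub_distrib,
    Set.ncard_eq_toFinset_card', Set.toFinset_ofPred, Finset.natCast_card_filter]
  gcongr with i
  split_ifs with h
  · rw [sub_le_iff_le_add']
    exact_mod_cast ceil_div_le_ceil_div_add_one hT hy (p i)
  · exact sub_nonpos.2 (Int.cast_le.2 (not_lt.1 fun hlt =>
      h (exists_add_int_mul_mem_Ico_of_ceil_lt hT hlt)))

end periodicRank

theorem arcsMeet_comp_iff {T x y x' y' : ℝ} {Φ : ℝ → ℝ} (hmono : Monotone Φ)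
    (hper : ∀ z (k : ℤ), Φ (z + k * T) = Φ z + k * T)
    (hy : ∀ z, y < z → Φ y < Φ z) (hy' : ∀ z, y' < z → Φ y' < Φ z) :
    ArcsMeet T (Φ x) (Φ y) (Φ x') (Φ y') ↔ ArcsMeet T x y x' y' := by
  constructor
  · rintro ⟨k, h₁, h₂⟩
    refine ⟨k, not_lt.1 fun h => ?_, not_lt.1 fun h => ?_⟩
    · have := hy' (x - k * T) (by linarith)
      have hx := hper (x - k * T) k
      rw [sub_add_cancel] at hx
      linarith
    · have := hy _ h
      rw [hper] at this
      linarith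
  · rintro ⟨k, h₁, h₂⟩
    exact ⟨k, (hper y' k) ▸ hmono h₁, (hper x' k) ▸ hmono h₂⟩

variable {V : Type*} {G : SimpleGraph V} {T : ℝ} {a b : V → ℝ}

theorem IsArcModel.ncard_endpoints_mem_Ico_le [Finite V] (hG : IsArcModel T G a b) (hT : 0 < T)
    (hb : ∀ v, b v < a v + T) (v : V) :
    {i : V ⊕ V | ∃ k : ℤ, Sum.elim a b i + k * T ∈ Ico (a v) (b v)}.ncard ≤
      2 * (G.neighborSet v).ncard + 1 := by
  set N := G.neighborSet v
  have hsub : {i : V ⊕ V | ∃ k : ℤ, Sum.elim a b i + k * T ∈ Ico (a v) (b v)} ⊆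
      insert (Sum.inl v) (Sum.inl '' N ∪ Sum.inr '' N) := by
    rintro (w | w) ⟨k, hk₁, hk₂⟩ <;> dsimp only [Sum.elim_inl, Sum.elim_inr] at hk₁ hk₂
    · by_cases hwv : w = v
      · exact hwv ▸ mem_insert _ _
      · refine Or.inr (Or.inl ⟨w, (hG.adj_iff v w (Ne.symm hwv)).2 ⟨k, ?_, hk₂.le⟩, rfl⟩)
        linarith [hG.le w]
    · by_cases hwv : w = v
      · subst hwv
        have hneg : (k : ℝ) < 0 := by nlinarith
        have hgt : (-1 : ℝ) < k := by nlinarith [hb w]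
        have : k < 0 := by exact_mod_cast hneg
        have : -1 < k := by exact_mod_cast hgt
        omega
      · refine Or.inr (Or.inr ⟨w, (hG.adj_iff v w (Ne.symm hwv)).2 ⟨k, hk₁, ?_⟩, rfl⟩)
        linarith [hG.le w]
  calc _ ≤ (insert (Sum.inl v) (Sum.inl '' N ∪ Sum.inr '' N)).ncard :=
        Set.ncard_le_ncard hsub (Set.toFinite _)
    _ ≤ (Sum.inl '' N ∪ Sum.inr '' N : Set (V ⊕ V)).ncard + 1 := Set.ncard_insert_le _ _
    _ ≤ (Sum.inl '' N : Set (V ⊕ V)).ncard + (Sum.inr '' N : Set (V ⊕ V)).ncard + 1 := by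
        gcongr
        exact Set.ncard_union_le _ _
    _ = 2 * N.ncard + 1 := by
        rw [Set.ncard_image_of_injective _ Sum.inl_injective,
          Set.ncard_image_of_injective _ Sum.inr_injective]
        ring

theorem IsArcModel.exists_short [Fintype V] (hG : IsArcModel T G a b) (hT : 0 < T)
    (hb : ∀ v, b v < a v + T) :
    ∃ a' b' : V → ℝ, IsArcModel T G a' b' ∧
      ∀ v, b' v - a' v ≤ T / (2 * Fintype.card V) * (2 * (G.neighborSet v).ncard + 1) := by
  set Φ := periodicRank T (Sum.elim a b)
  refine ⟨Φ ∘ a, Φ ∘ b, ⟨fun v => periodicRank_mono hT _ (hG.le v), fun u v huv => ?_⟩,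
    fun v => ?_⟩
  · have : Nonempty (V ⊕ V) := ⟨Sum.inl u⟩
    rw [hG.adj_iff u v huv]
    exact (arcsMeet_comp_iff (periodicRank_mono hT _) (periodicRank_add_int_mul hT.ne' _)
      (fun _ => periodicRank_lt_of_lt hT (Sum.elim a b) (Sum.inr u))
      (fun _ => periodicRank_lt_of_lt hT (Sum.elim a b) (Sum.inr v))).symm
  · calc Φ (b v) - Φ (a v)
        ≤ T / Fintype.card (V ⊕ V) *
          {i : V ⊕ V | ∃ k : ℤ, Sum.elim a b i + k * T ∈ Ico (a v) (b v)}.ncard :=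
          periodicRank_sub_le hT _ (hb v).le
      _ ≤ _ := by
        rw [Fintype.card_sum, ← two_mul, Nat.cast_mul, Nat.cast_two]
        gcongr
        exact_mod_cast hG.ncard_endpoints_mem_Ico_le hT hb v

theorem exists_int_mul_mem_Ioo {c lo hi : ℝ} (hc : 0 < c) (h : c < hi - lo) :
    ∃ m : ℤ, m * c ∈ Ioo lo hi := by
  refine ⟨⌊lo / c⌋ + 1, ?_, ?_⟩
  · have := Int.lt_floor_add_one (lo / c)
    rw [div_lt_iff₀ hc] at this
    push_cast
    linarith
  · have := Int.floor_le (lo / c)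
    rw [le_div_iff₀ hc] at this
    push_cast
    linarith

/-- The chord from `g₁` to `g₂` is orthogonal to the direction `(g₁ + g₂) / 2` and separates the
arc `(g₁, g₂)` from the complementary arc. -/
theorem cos_sub_lt_cos_sub {g₁ g₂ x y : ℝ} (hx : x ∈ Ioo (g₂ - 2 * π) g₁) (hy : y ∈ Ioo g₁ g₂) :
    cos (x - (g₁ + g₂) / 2) < cos (y - (g₁ + g₂) / 2) := by
  set d := (g₂ - g₁) / 2 with hd_def
  have hd : 0 < d := by linarith [hy.1, hy.2]
  have hdπ : d < π := by linarith [hx.1, hx.2]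
  calc cos (x - (g₁ + g₂) / 2) < cos d := by
        rw [← cos_neg, neg_sub]
        rcases le_total ((g₁ + g₂) / 2 - x) π with h | h
        · exact cos_lt_cos_of_nonneg_of_le_pi hd.le h (by linarith [hx.2])
        · rw [← cos_two_pi_sub]
          exact cos_lt_cos_of_nonneg_of_le_pi hd.le (by linarith) (by linarith [hx.1])
    _ < cos (y - (g₁ + g₂) / 2) := by
        rw [← cos_abs (y - _)]
        exact cos_lt_cos_of_nonneg_of_le_pi (abs_nonneg _) hdπ.le
          (abs_lt.2 ⟨by linarith [hy.1], by linarith [hy.2]⟩)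

theorem exists_fin_cos_sub_eq_mul {α : ℕ} (hα : 0 < α) (m : ℤ) :
    ∃ i : Fin α, ∃ ε : ℝ, ∀ x, cos (x - π * m / α) = ε * cos (x - π * i / α) := by
  have hr₀ : 0 ≤ m % α := Int.emod_nonneg m (by omega)
  have hrα : m % α < α := Int.emod_lt_of_pos m (by omega)
  refine ⟨⟨(m % α).toNat, by omega⟩, (-1) ^ (m / α), fun x => ?_⟩
  have hm : (m : ℝ) = (m % α : ℤ) + α * (m / α : ℤ) := by
    exact_mod_cast (Int.emod_add_mul_ediv m α).symm
  have hα' : (α : ℝ) ≠ 0 := by positivity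
  rw [← cos_sub_int_mul_pi, Fin.val_mk, show (((m % α).toNat : ℕ) : ℝ) = (m % α : ℤ) by
    exact_mod_cast Int.toNat_of_nonneg hr₀, hm]
  congr 1
  field_simp
  ring

theorem exists_cos_sub_ne {α : ℕ} (hα : 0 < α) {au bu av bv : ℝ} (huv : bu < av)
    (hvu : bv < au + 2 * π) (hgap : 2 * π / α < av - bu + (au + 2 * π - bv)) :
    ∃ i : Fin α, ∀ x ∈ Icc au bu, ∀ y ∈ Icc av bv, cos (x - π * i / α) ≠ cos (y - π * i / α) := by
  -- `g` and `σ - g` are the ends of a chord across both gaps, orthogonal to the direction `σ / 2`.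
  obtain ⟨m, hm₁, hm₂⟩ := exists_int_mul_mem_Ioo (lo := bu + bv) (hi := av + au + 2 * π)
    (by positivity : 0 < 2 * π / α) (by linarith)
  set σ := m * (2 * π / α)
  obtain ⟨g, hg₁, hg₂⟩ : (Ioo (max bu (σ - au - 2 * π)) (min av (σ - bv))).Nonempty :=
    nonempty_Ioo.2 (max_lt (lt_min huv (by linarith)) (lt_min (by linarith) (by linarith)))
  rw [max_lt_iff] at hg₁
  rw [lt_min_iff] at hg₂
  obtain ⟨i, ε, hcos⟩ := exists_fin_cos_sub_eq_mul hα m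
  refine ⟨i, fun x hx y hy hxy => ?_⟩
  have hθ : (g + (σ - g)) / 2 = π * m / α := by ring
  have := cos_sub_lt_cos_sub (g₁ := g) (g₂ := σ - g) (x := x) (y := y)
    ⟨by linarith [hx.1], by linarith [hx.2]⟩ ⟨by linarith [hy.1], by linarith [hy.2]⟩
  rw [hθ, hcos, hcos, hxy] at this
  exact lt_irrefl _ this

theorem exists_image_Icc_eq_Icc {f : ℝ → ℝ} (hf : Continuous f) {a b : ℝ} (hab : a ≤ b) :
    ∃ c d, c ≤ d ∧ f '' Icc a b = Icc c d := by
  have h := hf.continuousOn.image_Icc hab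
  exact ⟨_, _, nonempty_Icc.1 (h ▸ (nonempty_Icc.2 hab).image f), h⟩

theorem IsArcModel.boxicityLE {α : ℕ} (hα : 0 < α)
    (hG : IsArcModel (2 * π) G a b)
    (hshort : ∀ u v, u ≠ v → b u - a u + (b v - a v) < 2 * π - 2 * π / α) :
    BoxicityLE G α := by
  refine ⟨fun i v => (fun x => cos (x - π * i / α)) '' Icc (a v) (b v),
    fun i v => exists_image_Icc_eq_Icc (by fun_prop) (hG.le v), fun u v huv => ?_⟩
  rw [hG.adj_iff u v huv]
  constructor
  · intro hmeet i
    obtain ⟨x, hx, y, hy, k, rfl⟩ := hmeet.exists_eq_add_int_mul (hG.le u) (hG.le v)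
    refine ⟨_, mem_image_of_mem _ hx, y, hy, ?_⟩
    rw [add_sub_right_comm, cos_add_int_mul_two_pi]
  · intro hI
    by_contra hmeet
    obtain ⟨k, h₁, h₂⟩ := exists_int_of_not_arcsMeet two_pi_pos hmeet
    obtain ⟨i, hi⟩ := exists_cos_sub_ne hα h₁ h₂ (by linarith [hshort u v huv])
    obtain ⟨_, ⟨x, hx, rfl⟩, y, hy, hxy⟩ := hI i
    refine hi x hx (y + k * (2 * π)) ⟨by linarith [hy.1], by linarith [hy.2]⟩ ?_
    rw [add_sub_right_comm, cos_add_int_mul_two_pi]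
    exact hxy.symm

theorem two_pi_div_mul_add_lt {n α du dv : ℕ} (hα : 0 < α)
    (hu : du < n * (α - 1) / (2 * α)) (hv : dv < n * (α - 1) / (2 * α)) :
    2 * π / (2 * n) * (2 * du + 1) + 2 * π / (2 * n) * (2 * dv + 1) < 2 * π - 2 * π / α := by
  set K := n * (α - 1) / (2 * α)
  have hK : K * (2 * α) ≤ n * (α - 1) := Nat.div_mul_le_self _ _
  have hn : 0 < n := Nat.pos_of_ne_zero (by rintro rfl; simp [K] at hu)
  have hnat : (2 * du + 1 + (2 * dv + 1)) * α + 2 * α ≤ 2 * n * (α - 1) := by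
    have : (2 * du + 1 + (2 * dv + 1)) + 2 ≤ 4 * K := by omega
    nlinarith
  have hreal : ((2 * du + 1 + (2 * dv + 1)) * α + 2 * α : ℝ) ≤ 2 * n * (α - 1) := by
    have := (Nat.cast_le (α := ℝ)).2 hnat
    push_cast [Nat.cast_sub hα] at this
    exact this
  have hnR : (0 : ℝ) < n := by exact_mod_cast hn
  have hαR : (0 : ℝ) < α := by exact_mod_cast hα
  have hlhs : 2 * π / (2 * n) * (2 * du + 1) + 2 * π / (2 * n) * (2 * dv + 1) =
      π * (2 * du + 1 + (2 * dv + 1)) / n := by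
    field_simp
  have hrhs : 2 * π - 2 * π / α = 2 * π * (α - 1) / α := by
    field_simp
  rw [hlhs, hrhs, div_lt_div_iff₀ hnR hαR]
  nlinarith [pi_pos]

end CircularArc

/-- a circular arc graph on `n` vertices with maximum degree
`Δ < ⌊n(α−1)/(2α)⌋` (for an integer `α ≥ 2`) has boxicity at most `α`. -/
theorem stmt12 {V : Type*} [Fintype V] (G : SimpleGraph V)
    (hrep : ∃ f : V → ℝ × ℝ, IsCARep G f) (α : ℕ) (hα : 2 ≤ α)
    (hΔ : ∀ v : V, (G.neighborSet v).ncard < Fintype.card V * (α - 1) / (2 * α)) :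
    BoxicityLE G α := by
  obtain ⟨f, hf⟩ := hrep
  obtain ⟨a, b, hG, hlen⟩ :=
    hf.isArcModel.exists_short two_pi_pos fun v => by linarith [(hf.1 v).2]
  refine hG.boxicityLE (by omega) fun u v _ => ?_
  linarith [hlen u, hlen v, CircularArc.two_pi_div_mul_add_lt (by omega) (hΔ u) (hΔ v)]
end
end

section
/- For every integer α ≥ 2 and every n divisible by 2α+2 (with n sufficiently large), there exists a circular arc graph G on n vertices with maximum degree exactly nα/(2(α+1)) + (α+2) = n(α−1)/(2α) + n/(2α(α+1)) + (α+2) and boxicity strictly greater than α. -/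
noncomputable section

/-!
Place `2α + 2` equally spaced points on the circle. The long arc `u_i` covers the `α` sectors
`i, …, i + α - 1`, so `u_i` and `u_j` meet unless they are opposite: the `u_i` induce the complete
`(α + 1)`-partite graph with parts of size two, whose boxicity exceeds `α`. Each sector also carries
its own arc `v_i` and `m` tiny arcs in its interior. Then `u_i` meets `2α` long arcs, `α + 2` sector
arcs and the `αm` tiny arcs of the sectors it covers, and no vertex has more neighbours.

Every arc either has its endpoints on the grid or lies inside one open cell, so each intersection
question becomes membership in a cyclic interval of `ℤ/(2α + 2)ℤ`, and each degree a count of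
such memberships.
-/

/-- The cyclic interval `{x, x + 1, …, x + r}` of `ℤ/Mℤ`, as a set of integers. -/
def cycIcc (M : ℕ) (x r : ℤ) : Set ℤ := {j | (j - x) % M ≤ r}

section CycIcc

variable {M : ℕ} {x r i j : ℤ}

lemma mem_cycIcc_iff_exists (hM : 0 < M) :
    j ∈ cycIcc M x r ↔ ∃ k : ℤ, x ≤ j + k * M ∧ j + k * M ≤ x + r := by
  have hM' : (0 : ℤ) < M := by exact_mod_cast hM
  constructor
  · intro h
    refine ⟨-((j - x) / M), ?_, ?_⟩ <;>
      linarith [Int.emod_def (j - x) M, Int.emod_nonneg (j - x) hM'.ne', h.out]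
  · rintro ⟨k, hxk, hkr⟩
    show (j - x) % M ≤ r
    have hshift : (j - x) % M = (j + k * M - x) % M := by
      rw [show j + k * M - x = j - x + k * M by ring, Int.add_mul_emod_self_right]
    have hle : (j + k * M - x) % M ≤ j + k * M - x := by
      rw [Int.emod_def]
      nlinarith [Int.ediv_nonneg (sub_nonneg.mpr hxk) hM'.le]
    linarith

lemma mem_cycIcc_iff_of_le_of_lt (hxj : x ≤ j) (hjx : j < x + M) :
    j ∈ cycIcc M x r ↔ j ≤ x + r := by
  show (j - x) % M ≤ r ↔ _
  rw [Int.emod_eq_of_lt (by omega) (by omega)]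
  omega

lemma mem_cycIcc_iff_of_bounds (hM : 0 < M) (hj : 0 ≤ j) (hjM : j < M) (hx : -M ≤ x)
    (hxr : x + r < 2 * M) :
    j ∈ cycIcc M x r ↔
      (x ≤ j - M ∧ j - M ≤ x + r) ∨ (x ≤ j ∧ j ≤ x + r) ∨ (x ≤ j + M ∧ j + M ≤ x + r) := by
  rw [mem_cycIcc_iff_exists hM]
  constructor
  · rintro ⟨k, hxk, hkr⟩
    have hk1 : -1 ≤ k := by
      by_contra! hk
      nlinarith [show k * (M : ℤ) ≤ -2 * M by nlinarith]
    have hk2 : k ≤ 1 := by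
      by_contra! hk
      nlinarith [show 2 * (M : ℤ) ≤ k * M by nlinarith]
    interval_cases k <;> omega
  · rintro (h | h | h)
    exacts [⟨-1, by omega⟩, ⟨0, by omega⟩, ⟨1, by omega⟩]

lemma mem_cycIcc_comm (hM : 0 < M) : i ∈ cycIcc M j r ↔ j ∈ cycIcc M (i - r) r := by
  rw [mem_cycIcc_iff_exists hM, mem_cycIcc_iff_exists hM]
  constructor <;> rintro ⟨k, hk⟩ <;> exact ⟨-k, by rw [neg_mul]; omega⟩

lemma card_filter_mem_cycIcc [DecidablePred fun j : Fin M => (j : ℤ) ∈ cycIcc M x r]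
    (hr : 0 ≤ r) (hrM : r < M) :
    (Finset.univ.filter fun j : Fin M => (j : ℤ) ∈ cycIcc M x r).card = r.toNat + 1 := by
  have hM : (0 : ℤ) < M := by omega
  have hmod : ∀ d, 0 ≤ d → d ≤ r → (((x + d) % M : ℤ) - x) % M = d := fun d hd hdr => by
    rw [show (x + d) % M - x = d + (-((x + d) / M)) * M by linarith [Int.emod_def (x + d) M],
      Int.add_mul_emod_self_right, Int.emod_eq_of_lt hd (by omega)]
  rw [show r.toNat + 1 = (Finset.Icc 0 r).card by rw [Int.card_Icc]; omega]
  refine Finset.card_nbij' (fun j => ((j : ℤ) - x) % M)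
    (fun d => ⟨((x + d) % M).toNat, by have := Int.emod_lt_of_pos (x + d) hM; omega⟩)
    ?_ ?_ ?_ ?_
  · intro j hj
    simp only [Finset.coe_filter, Finset.mem_univ, true_and] at hj
    simpa using ⟨Int.emod_nonneg _ hM.ne', hj⟩
  · intro d hd
    simp only [Finset.coe_Icc, Set.mem_Icc] at hd
    simp only [Finset.coe_filter, Finset.mem_univ, true_and]
    show (_ - x) % M ≤ r
    rw [Int.toNat_of_nonneg (Int.emod_nonneg _ hM.ne'), hmod d hd.1 hd.2]
    exact hd.2
  · intro j _
    ext
    simp only [add_sub_cancel, Int.add_emod_emod, Int.emod_eq_of_lt (Int.natCast_nonneg _)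
      (by exact_mod_cast j.isLt : (j : ℤ) < M), Int.toNat_natCast]
  · intro d hd
    simp only [Finset.coe_Icc, Set.mem_Icc] at hd
    simp only [Int.toNat_of_nonneg (Int.emod_nonneg _ hM.ne'), hmod d hd.1 hd.2]

end CycIcc

section Arcs

open Real Set

/-- The point at angle `π w / a`; in these units `sector a c` is the open cell `c < w < c + 1`. -/
def gridPt (a : ℕ) (w : ℝ) : Circle2pi := ((π * w / a : ℝ) : Circle2pi)

/-- The arc from `π i / a` to `π (i + ℓ) / a`, as (start, length) data. -/
def gridArc (a : ℕ) (i ℓ : ℤ) : ℝ × ℝ := (π * (i + ℓ) / a, π * ℓ / a)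

def arcOf (p : ℝ × ℝ) : Set Circle2pi := arcSet p.1 p.2

variable {a : ℕ}

lemma gridPt_eq_gridPt_iff (ha : 0 < a) {w w' : ℝ} :
    gridPt a w = gridPt a w' ↔ ∃ k : ℤ, w = w' + k * (2 * a) := by
  have ha' : (0 : ℝ) < a := by exact_mod_cast ha
  rw [gridPt, gridPt, ← sub_eq_zero, ← AddCircle.coe_sub, AddCircle.coe_eq_zero_iff]
  refine exists_congr fun k => ?_
  rw [zsmul_eq_mul]
  constructor <;> intro h <;> field_simp at h ⊢ <;> nlinarith [pi_pos]

lemma image_gridPt (S : Set ℝ) :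
    gridPt a '' S = (fun t : ℝ => (t : Circle2pi)) '' ((fun w => π / a * w) '' S) := by
  rw [image_image]
  refine image_congr fun w _ => ?_
  simp only [gridPt, div_mul_eq_mul_div]

lemma arcSet_eq_image (s ℓ : ℝ) : arcSet s ℓ = (fun t : ℝ => (t : Circle2pi)) '' Icc (s - ℓ) s := by
  rw [arcSet, show Icc (s - ℓ) s = Icc (s - ℓ) (s - 0) by rw [sub_zero], ← image_const_sub_Icc,
    image_image]

lemma arcOf_gridArc (ha : 0 < a) {i ℓ : ℤ} (hℓ : 0 ≤ ℓ) :
    arcOf (gridArc a i ℓ) = gridPt a '' Icc (i : ℝ) (i + ℓ) := by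
  have ha' : (0 : ℝ) < a := by exact_mod_cast ha
  rw [image_gridPt, image_mul_left_Icc (by positivity) (by simp [hℓ]), arcOf, arcSet_eq_image,
    gridArc]
  congr 2 <;> ring

lemma sector_eq_image (ha : 0 < a) (c : ℤ) : sector a c = gridPt a '' Ioo (c : ℝ) (c + 1) := by
  have ha' : (0 : ℝ) < a := by exact_mod_cast ha
  rw [image_gridPt, image_mul_left_Ioo (by positivity), sector]
  congr 2 <;> ring

lemma gridArc_inter_nonempty_iff (ha : 0 < a) {i j ℓ ℓ' : ℤ} (hℓ : 0 ≤ ℓ) (hℓ' : 0 ≤ ℓ') :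
    (arcOf (gridArc a i ℓ) ∩ arcOf (gridArc a j ℓ')).Nonempty ↔
      j ∈ cycIcc (2 * a) (i - ℓ') (ℓ + ℓ') := by
  rw [arcOf_gridArc ha hℓ, arcOf_gridArc ha hℓ', mem_cycIcc_iff_exists (by omega)]
  constructor
  · rintro ⟨_, ⟨w, ⟨hw₁, hw₂⟩, rfl⟩, w', ⟨hw₁', hw₂'⟩, hww'⟩
    obtain ⟨k, rfl⟩ := (gridPt_eq_gridPt_iff ha).mp hww'
    refine ⟨-k, ?_, ?_⟩
    · exact_mod_cast (show (i - ℓ' : ℝ) ≤ j + -k * (2 * a : ℕ) by push_cast; linarith)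
    · exact_mod_cast (show (j + -k * (2 * a : ℕ) : ℝ) ≤ i - ℓ' + (ℓ + ℓ') by push_cast; linarith)
  · rintro ⟨k, hk₁, hk₂⟩
    set w : ℤ := max i (j + k * (2 * a : ℕ))
    refine ⟨gridPt a w, ⟨w, ⟨?_, ?_⟩, rfl⟩, w - k * (2 * a : ℕ), ⟨?_, ?_⟩,
      (gridPt_eq_gridPt_iff ha).mpr ⟨-k, by push_cast; ring⟩⟩ <;>
    · norm_cast
      omega

lemma mem_arcOf_gridArc_iff_of_mem_sector (ha : 0 < a) {i ℓ c : ℤ} (hℓ : 0 ≤ ℓ)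
    {p : Circle2pi} (hp : p ∈ sector a c) :
    p ∈ arcOf (gridArc a i ℓ) ↔ c ∈ cycIcc (2 * a) i (ℓ - 1) := by
  rw [sector_eq_image ha] at hp
  obtain ⟨w, ⟨hw₁, hw₂⟩, rfl⟩ := hp
  rw [arcOf_gridArc ha hℓ, mem_cycIcc_iff_exists (by omega)]
  constructor
  · rintro ⟨w', ⟨hw₁', hw₂'⟩, hww'⟩
    obtain ⟨k, rfl⟩ := (gridPt_eq_gridPt_iff ha).mp hww'
    have h₁ : i < c + 1 + k * (2 * a : ℕ) := by
      exact_mod_cast (show (i : ℝ) < c + 1 + k * (2 * a : ℕ) by push_cast; linarith)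
    have h₂ : c + k * (2 * a : ℕ) < i + ℓ := by
      exact_mod_cast (show (c + k * (2 * a : ℕ) : ℝ) < i + ℓ by push_cast; linarith)
    exact ⟨k, by omega, by omega⟩
  · rintro ⟨k, hk₁, hk₂⟩
    have h₁ : (i : ℝ) ≤ c + k * (2 * a : ℕ) := by exact_mod_cast hk₁
    have h₂ : (c + 1 + k * (2 * a : ℕ) : ℝ) ≤ i + ℓ := by
      exact_mod_cast (show c + 1 + k * (2 * a : ℕ) ≤ i + ℓ by omega)
    push_cast at h₁ h₂
    exact ⟨w + k * (2 * a), ⟨by linarith, by linarith⟩, (gridPt_eq_gridPt_iff ha).mpr ⟨k, rfl⟩⟩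

lemma arcOf_gridArc_inter_nonempty_iff_of_subset_sector (ha : 0 < a) {i ℓ c : ℤ} (hℓ : 0 ≤ ℓ)
    {T : Set Circle2pi} (hT : T ⊆ sector a c) (hTne : T.Nonempty) :
    (arcOf (gridArc a i ℓ) ∩ T).Nonempty ↔ c ∈ cycIcc (2 * a) i (ℓ - 1) := by
  constructor
  · rintro ⟨p, hp, hpT⟩
    exact (mem_arcOf_gridArc_iff_of_mem_sector ha hℓ (hT hpT)).mp hp
  · intro hc
    obtain ⟨p, hpT⟩ := hTne
    exact ⟨p, (mem_arcOf_gridArc_iff_of_mem_sector ha hℓ (hT hpT)).mpr hc, hpT⟩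

lemma eq_of_sector_inter_nonempty (ha : 0 < a) {c c' : ℤ} (hc : 0 ≤ c) (hca : c < 2 * a)
    (hc' : 0 ≤ c') (hca' : c' < 2 * a) (h : (sector a c ∩ sector a c').Nonempty) : c = c' := by
  rw [sector_eq_image ha, sector_eq_image ha] at h
  obtain ⟨_, ⟨w, ⟨hw₁, hw₂⟩, rfl⟩, w', ⟨hw₁', hw₂'⟩, hww'⟩ := h
  obtain ⟨k, rfl⟩ := (gridPt_eq_gridPt_iff ha).mp hww'
  have h₁ : c' < c + 1 + k * (2 * a : ℕ) := by
    exact_mod_cast (show (c' : ℝ) < c + 1 + k * (2 * a : ℕ) by push_cast; linarith)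
  have h₂ : c + k * (2 * a : ℕ) < c' + 1 := by
    exact_mod_cast (show (c + k * (2 * a : ℕ) : ℝ) < c' + 1 by push_cast; linarith)
  have hdvd : ((2 * a : ℕ) : ℤ) ∣ c' - c := ⟨k, by linarith⟩
  have := Int.eq_zero_of_abs_lt_dvd hdvd (abs_lt.mpr ⟨by push_cast; omega, by push_cast; omega⟩)
  omega

lemma sector_mul_subset (ha : 0 < a) {m : ℕ} {c q : ℤ} (hq : 0 ≤ q) (hqm : q < m) :
    sector (a * m) (q + m * c) ⊆ sector a c := by
  have ha' : (0 : ℝ) < a := by exact_mod_cast ha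
  have hm' : (0 : ℝ) < m := by exact_mod_cast (show (0 : ℤ) < m by omega)
  have hq' : (0 : ℝ) ≤ q := by exact_mod_cast hq
  have hqm' : (q : ℝ) + 1 ≤ m := by exact_mod_cast (show q + 1 ≤ m by omega)
  refine image_mono (Ioo_subset_Ioo ?_ ?_) <;> push_cast <;>
    rw [div_le_div_iff₀ (by positivity) (by positivity)] <;>
    nlinarith [mul_nonneg (mul_pos pi_pos ha').le hq',
      mul_nonneg (mul_pos pi_pos ha').le (sub_nonneg.mpr hqm')]

/-- A short arc strictly inside the cell `sector b c`. -/
def cellArc (b : ℕ) (c : ℤ) : ℝ × ℝ := (π * (c + 3 / 4) / b, π / (2 * b))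

lemma arcOf_cellArc_subset (hb : 0 < b) (c : ℤ) : arcOf (cellArc b c) ⊆ sector b c := by
  have hb' : (0 : ℝ) < b := by exact_mod_cast hb
  rw [arcOf, arcSet_eq_image, cellArc]
  refine image_mono (Icc_subset_Ioo ?_ ?_) <;> field_simp <;> nlinarith [pi_pos]

lemma arcOf_nonempty {p : ℝ × ℝ} (hp : 0 ≤ p.2) : (arcOf p).Nonempty :=
  ⟨_, 0, ⟨le_rfl, hp⟩, rfl⟩

end Arcs

def arcGraph {V : Type*} (f : V → ℝ × ℝ) : SimpleGraph V where
  Adj u v := u ≠ v ∧ (arcOf (f u) ∩ arcOf (f v)).Nonempty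
  symm := ⟨fun _ _ h => ⟨h.1.symm, Set.inter_comm (arcOf _) _ ▸ h.2⟩⟩
  loopless := ⟨fun _ h => h.1 rfl⟩

lemma isCARep_arcGraph {V : Type*} {f : V → ℝ × ℝ}
    (hf : ∀ v, 0 < (f v).2 ∧ (f v).2 < 2 * Real.pi) : IsCARep (arcGraph f) f :=
  ⟨hf, fun _ _ huv => and_iff_right huv⟩

lemma IsCARep.comap {V W : Type*} {G : SimpleGraph V} {f : V → ℝ × ℝ} (hG : IsCARep G f)
    {e : W → V} (he : e.Injective) : IsCARep (G.comap e) (f ∘ e) :=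
  ⟨fun v => hG.1 (e v), fun u v huv => hG.2 (e u) (e v) (he.ne huv)⟩

lemma BoxicityLE.of_comap {V W : Type*} {G : SimpleGraph V} {k : ℕ} (e : W ≃ V)
    (h : BoxicityLE (G.comap e) k) : BoxicityLE G k := by
  obtain ⟨I, hI, hadj⟩ := h
  refine ⟨fun i v => I i (e.symm v), fun i v => hI i _, fun u v huv => ?_⟩
  simpa using hadj (e.symm u) (e.symm v) (e.symm.injective.ne huv)

lemma ncard_neighborSet_comap {V W : Type*} (G : SimpleGraph V) (e : W ≃ V) (v : W) :
    ((G.comap e).neighborSet v).ncard = (G.neighborSet (e v)).ncard := by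
  rw [← Set.ncard_image_of_injective _ e.injective]
  congr 1
  ext w
  simp

lemma Set.Icc_inter_Icc_nonempty_of_cross {a₁ a₂ b₁ b₂ c₁ c₂ d₁ d₂ : ℝ}
    (hAB : ¬ (Set.Icc a₁ a₂ ∩ Set.Icc b₁ b₂).Nonempty)
    (hAC : (Set.Icc a₁ a₂ ∩ Set.Icc c₁ c₂).Nonempty)
    (hAD : (Set.Icc a₁ a₂ ∩ Set.Icc d₁ d₂).Nonempty)
    (hBC : (Set.Icc b₁ b₂ ∩ Set.Icc c₁ c₂).Nonempty)
    (hBD : (Set.Icc b₁ b₂ ∩ Set.Icc d₁ d₂).Nonempty) :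
    (Set.Icc c₁ c₂ ∩ Set.Icc d₁ d₂).Nonempty := by
  obtain ⟨p, ⟨hp₁, hp₂⟩, hp₃, hp₄⟩ := hAC
  obtain ⟨q, ⟨hq₁, hq₂⟩, hq₃, hq₄⟩ := hBC
  obtain ⟨r, ⟨hr₁, hr₂⟩, hr₃, hr₄⟩ := hAD
  obtain ⟨s, ⟨hs₁, hs₂⟩, hs₃, hs₄⟩ := hBD
  rcases lt_or_ge a₂ b₁ with h | h
  · exact ⟨a₂, ⟨by linarith, by linarith⟩, by linarith, by linarith⟩
  rcases lt_or_ge b₂ a₁ with h' | h'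
  · exact ⟨b₂, ⟨by linarith, by linarith⟩, by linarith, by linarith⟩
  exact absurd ⟨max a₁ b₁, ⟨le_max_left _ _, max_le (by linarith) h⟩, le_max_right _ _,
    max_le h' (by linarith)⟩ hAB

/-- The easy half of Roberts' theorem: two of the `k + 1` non-edges are separated in the same
coordinate, and four pairwise crossing intervals cannot form two disjoint pairs. -/
lemma not_boxicityLE_of_pairs {V : Type*} {G : SimpleGraph V} {k : ℕ} (x y : Fin (k + 1) → V)
    (hxy : ∀ b, x b ≠ y b) (hnadj : ∀ b, ¬ G.Adj (x b) (y b))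
    (hadj : ∀ b b', b ≠ b' →
      G.Adj (x b) (x b') ∧ G.Adj (x b) (y b') ∧ G.Adj (y b) (x b') ∧ G.Adj (y b) (y b')) :
    ¬ BoxicityLE G k := by
  rintro ⟨I, hI, hG⟩
  have hsep : ∀ b, ∃ i, ¬ (I i (x b) ∩ I i (y b)).Nonempty := fun b => by
    by_contra! h
    exact hnadj b ((hG _ _ (hxy b)).mpr h)
  choose c hc using hsep
  obtain ⟨b, b', hbb', hcc⟩ := Fintype.exists_ne_map_eq_of_card_lt c (by simp)
  have meet : ∀ {u v}, G.Adj u v → (I (c b) u ∩ I (c b) v).Nonempty :=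
    fun huv => (hG _ _ huv.ne).mp huv (c b)
  obtain ⟨h₁, h₂, h₃, h₄⟩ := hadj b b' hbb'
  have hcd := hc b'
  rw [← hcc] at hcd
  obtain ⟨a₁, a₂, -, hA⟩ := hI (c b) (x b)
  obtain ⟨b₁, b₂, -, hB⟩ := hI (c b) (y b)
  obtain ⟨c₁, c₂, -, hC⟩ := hI (c b) (x b')
  obtain ⟨d₁, d₂, -, hD⟩ := hI (c b) (y b')
  have hab := hc b
  rw [hA, hB] at hab
  rw [hC, hD] at hcd
  have m₁ := meet h₁; have m₂ := meet h₂; have m₃ := meet h₃; have m₄ := meet h₄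
  rw [hA, hC] at m₁; rw [hA, hD] at m₂; rw [hB, hC] at m₃; rw [hB, hD] at m₄
  exact hcd (Set.Icc_inter_Icc_nonempty_of_cross hab m₁ m₂ m₃ m₄)

lemma card_filter_sum {A B : Type*} [Fintype A] [Fintype B] (P : A ⊕ B → Prop) [DecidablePred P] :
    (Finset.univ.filter P).card =
      (Finset.univ.filter fun a => P (.inl a)).card +
        (Finset.univ.filter fun b => P (.inr b)).card := by
  simp only [Finset.card_filter, Fintype.sum_sum_type]

lemma card_filter_prod_fst {A B : Type*} [Fintype A] [Fintype B] (P : A → Prop) [DecidablePred P] :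
    (Finset.univ.filter fun ab : A × B => P ab.1).card =
      (Finset.univ.filter P).card * Fintype.card B := by
  rw [← Finset.univ_product_univ, Finset.filter_product_left, Finset.card_product, Finset.card_univ]

lemma card_filter_ne_and {A : Type*} [Fintype A] [DecidableEq A] {P : A → Prop} [DecidablePred P]
    {i : A} (hi : P i) :
    (Finset.univ.filter fun j => i ≠ j ∧ P j).card = (Finset.univ.filter P).card - 1 := by
  rw [← Finset.card_erase_of_mem (Finset.mem_filter.mpr ⟨Finset.mem_univ _, hi⟩)]
  congr 1
  ext j
  simp [and_comm, eq_comm]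

lemma ncard_neighborSet_eq_card_filter {V : Type*} [Fintype V] (G : SimpleGraph V)
    [DecidableRel G.Adj] (v : V) :
    (G.neighborSet v).ncard = (Finset.univ.filter (G.Adj v)).card := by
  rw [← Set.ncard_coe_finset]
  congr 1
  ext
  simp

namespace HighBoxicity

variable (α m : ℕ)

/-- `inl i` is the long arc `u_i`, `inr (inl i)` the sector arc `v_i`, and `inr (inr (i, q))` the
`q`-th tiny arc inside `v_i`. -/
abbrev Vertex := Fin (2 * (α + 1)) ⊕ Fin (2 * (α + 1)) ⊕ (Fin (2 * (α + 1)) × Fin m)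

def arcs : Vertex α m → ℝ × ℝ
  | .inl i => gridArc (α + 1) i α
  | .inr (.inl i) => gridArc (α + 1) i 1
  -- `finProdFinEquiv (i, q) = q + m i`: the `q`-th of the `m` cells into which sector `i` is cut
  | .inr (.inr p) => cellArc ((α + 1) * m) (finProdFinEquiv p : ℕ)

abbrev graph : SimpleGraph (Vertex α m) := arcGraph (arcs α m)

variable {α m}

lemma isCARep_graph (hα : 1 ≤ α) : IsCARep (graph α m) (arcs α m) := by
  have hα' : (1 : ℝ) ≤ α := by exact_mod_cast hα
  refine isCARep_arcGraph fun v => ?_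
  rcases v with i | i | ⟨j, q⟩
  iterate 2
    simp only [arcs, gridArc]
    exact ⟨by positivity, (div_lt_iff₀ (by positivity)).mpr (by push_cast; nlinarith [Real.pi_pos])⟩
  · have hb : (1 : ℝ) ≤ ((α + 1) * m : ℕ) := by exact_mod_cast Nat.mul_pos (Nat.succ_pos α) q.pos
    simp only [arcs, cellArc]
    exact ⟨div_pos Real.pi_pos (by linarith),
      (div_lt_iff₀ (by linarith)).mpr (by nlinarith [Real.pi_pos])⟩

lemma arcOf_tiny_subset (p : Fin (2 * (α + 1)) × Fin m) :
    arcOf (arcs α m (.inr (.inr p))) ⊆ sector (α + 1) p.1 := by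
  have hm : 0 < m := p.2.pos
  refine (arcOf_cellArc_subset (by positivity) _).trans ?_
  have := sector_mul_subset (a := α + 1) (m := m) (c := p.1) (q := p.2) (by omega) (by positivity)
    (by exact_mod_cast p.2.isLt)
  rwa [finProdFinEquiv_apply_val, Nat.cast_add, Nat.cast_mul]

lemma arcOf_tiny_nonempty (p : Fin (2 * (α + 1)) × Fin m) :
    (arcOf (arcs α m (.inr (.inr p)))).Nonempty :=
  arcOf_nonempty (by simp only [arcs, cellArc]; positivity)

lemma adj_long_long {i j : Fin (2 * (α + 1))} :
    (graph α m).Adj (.inl i) (.inl j) ↔ i ≠ j ∧ (j : ℤ) ∈ cycIcc (2 * (α + 1)) (i - α) (α + α) := by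
  show _ ∧ _ ↔ _
  rw [Sum.inl_injective.ne_iff]
  exact and_congr_right fun _ =>
    gridArc_inter_nonempty_iff (by omega) (by positivity) (by positivity)

lemma adj_long_side {i j : Fin (2 * (α + 1))} :
    (graph α m).Adj (.inl i) (.inr (.inl j)) ↔ (j : ℤ) ∈ cycIcc (2 * (α + 1)) (i - 1) (α + 1) :=
  (and_iff_right Sum.inl_ne_inr).trans
    (gridArc_inter_nonempty_iff (by omega) (by positivity) (by positivity))

lemma adj_side_long {i j : Fin (2 * (α + 1))} :
    (graph α m).Adj (.inr (.inl i)) (.inl j) ↔ (j : ℤ) ∈ cycIcc (2 * (α + 1)) (i - α) (1 + α) :=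
  (and_iff_right Sum.inr_ne_inl).trans
    (gridArc_inter_nonempty_iff (by omega) (by positivity) (by positivity))

lemma adj_side_side {i j : Fin (2 * (α + 1))} :
    (graph α m).Adj (.inr (.inl i)) (.inr (.inl j)) ↔
      i ≠ j ∧ (j : ℤ) ∈ cycIcc (2 * (α + 1)) (i - 1) 2 := by
  show _ ∧ _ ↔ _
  rw [Sum.inr_injective.ne_iff, Sum.inl_injective.ne_iff]
  exact and_congr_right fun _ =>
    (gridArc_inter_nonempty_iff (by omega) zero_le_one zero_le_one).trans (by norm_num)

lemma adj_long_tiny {i : Fin (2 * (α + 1))} {p : Fin (2 * (α + 1)) × Fin m} :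
    (graph α m).Adj (.inl i) (.inr (.inr p)) ↔ (p.1 : ℤ) ∈ cycIcc (2 * (α + 1)) i (α - 1) :=
  (and_iff_right Sum.inl_ne_inr).trans
    (arcOf_gridArc_inter_nonempty_iff_of_subset_sector (by omega) (by positivity)
      (arcOf_tiny_subset p) (arcOf_tiny_nonempty p))

lemma adj_side_tiny {i : Fin (2 * (α + 1))} {p : Fin (2 * (α + 1)) × Fin m} :
    (graph α m).Adj (.inr (.inl i)) (.inr (.inr p)) ↔ (p.1 : ℤ) ∈ cycIcc (2 * (α + 1)) i 0 :=
  (and_iff_right (by simp)).trans <| (sub_self (1 : ℤ)).symm ▸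
    arcOf_gridArc_inter_nonempty_iff_of_subset_sector (by omega) zero_le_one
      (arcOf_tiny_subset p) (arcOf_tiny_nonempty p)

lemma not_adj_tiny_tiny {p p' : Fin (2 * (α + 1)) × Fin m} :
    ¬ (graph α m).Adj (.inr (.inr p)) (.inr (.inr p')) := by
  rintro ⟨hne, hmeet⟩
  have hm : 0 < m := p.2.pos
  have hlt (r : Fin (2 * (α + 1)) × Fin m) :
      ((finProdFinEquiv r : ℕ) : ℤ) < 2 * ((α + 1) * m : ℕ) := by
    have := (finProdFinEquiv r).isLt
    push_cast at this ⊢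
    linarith
  have hcell := eq_of_sector_inter_nonempty (by positivity) (by positivity) (hlt p) (by positivity)
    (hlt p') (hmeet.mono (Set.inter_subset_inter (arcOf_cellArc_subset (by positivity) _)
      (arcOf_cellArc_subset (by positivity) _)))
  exact hne (congrArg _ (congrArg _
    (finProdFinEquiv.injective (Fin.ext (by exact_mod_cast hcell)))))

lemma adj_long_long_iff_not_opposite {i j : Fin (2 * (α + 1))} :
    (graph α m).Adj (.inl i) (.inl j) ↔
      (i : ℕ) ≠ j ∧ (i : ℕ) + (α + 1) ≠ j ∧ (j : ℕ) + (α + 1) ≠ i := by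
  have hi := i.isLt
  have hj := j.isLt
  rw [adj_long_long, mem_cycIcc_iff_of_bounds (by positivity) (by positivity) (by omega)
    (by push_cast; omega) (by push_cast; omega), Ne, Fin.ext_iff]
  push_cast
  omega

lemma not_boxicityLE_graph : ¬ BoxicityLE (graph α m) α := by
  refine not_boxicityLE_of_pairs (fun b => .inl ⟨b, by omega⟩)
    (fun b => .inl ⟨b + (α + 1), by omega⟩) (fun b => by simp) (fun b => ?_) (fun b b' hbb' => ?_)
  · simp only [adj_long_long_iff_not_opposite]
    omega
  · have := Fin.val_ne_of_ne hbb'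
    simp only [adj_long_long_iff_not_opposite]
    omega

lemma adj_tiny_long {p : Fin (2 * (α + 1)) × Fin m} {i : Fin (2 * (α + 1))} :
    (graph α m).Adj (.inr (.inr p)) (.inl i) ↔
      (i : ℤ) ∈ cycIcc (2 * (α + 1)) (p.1 - (α - 1)) (α - 1) :=
  (SimpleGraph.adj_comm _ _ _).trans (adj_long_tiny.trans (mem_cycIcc_comm (by positivity)))

lemma adj_tiny_side {p : Fin (2 * (α + 1)) × Fin m} {i : Fin (2 * (α + 1))} :
    (graph α m).Adj (.inr (.inr p)) (.inr (.inl i)) ↔ (i : ℤ) ∈ cycIcc (2 * (α + 1)) p.1 0 := by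
  rw [SimpleGraph.adj_comm, adj_side_tiny, mem_cycIcc_comm (by positivity), sub_zero]

lemma ncard_neighborSet_long (hα : 1 ≤ α) (i : Fin (2 * (α + 1))) :
    ((graph α m).neighborSet (.inl i)).ncard = 2 * α + (α + 2) + α * m := by
  classical
  have hi : (i : ℤ) ∈ cycIcc (2 * (α + 1)) (i - α) (α + α) :=
    (mem_cycIcc_iff_of_le_of_lt (by omega) (by push_cast; omega)).mpr (by omega)
  rw [ncard_neighborSet_eq_card_filter, card_filter_sum, card_filter_sum]
  simp only [adj_long_long, adj_long_side, adj_long_tiny]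
  rw [card_filter_ne_and (P := fun j : Fin _ => (j : ℤ) ∈ cycIcc _ _ _) hi,
    card_filter_prod_fst (fun j : Fin (2 * (α + 1)) => (j : ℤ) ∈ cycIcc _ _ _),
    card_filter_mem_cycIcc (by positivity) (by push_cast; omega),
    card_filter_mem_cycIcc (by positivity) (by push_cast; omega),
    card_filter_mem_cycIcc (by omega) (by push_cast; omega), Fintype.card_fin,
    show ((α : ℤ) - 1).toNat + 1 = α by omega]
  omega

lemma ncard_neighborSet_side (hα : 1 ≤ α) (i : Fin (2 * (α + 1))) :
    ((graph α m).neighborSet (.inr (.inl i))).ncard = (α + 2) + 2 + m := by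
  classical
  have hi : (i : ℤ) ∈ cycIcc (2 * (α + 1)) (i - 1) 2 :=
    (mem_cycIcc_iff_of_le_of_lt (by omega) (by push_cast; omega)).mpr (by omega)
  rw [ncard_neighborSet_eq_card_filter, card_filter_sum, card_filter_sum]
  simp only [adj_side_long, adj_side_side, adj_side_tiny]
  rw [card_filter_ne_and (P := fun j : Fin _ => (j : ℤ) ∈ cycIcc _ _ _) hi,
    card_filter_prod_fst (fun j : Fin (2 * (α + 1)) => (j : ℤ) ∈ cycIcc _ _ _),
    card_filter_mem_cycIcc (by positivity) (by push_cast; omega),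
    card_filter_mem_cycIcc (by positivity) (by push_cast; omega),
    card_filter_mem_cycIcc le_rfl (by positivity), Fintype.card_fin, Int.toNat_zero, zero_add,
    one_mul]
  omega

lemma ncard_neighborSet_tiny (hα : 1 ≤ α) (p : Fin (2 * (α + 1)) × Fin m) :
    ((graph α m).neighborSet (.inr (.inr p))).ncard = α + 1 := by
  classical
  rw [ncard_neighborSet_eq_card_filter, card_filter_sum, card_filter_sum]
  simp only [adj_tiny_long, adj_tiny_side, not_adj_tiny_tiny, Finset.filter_false,
    Finset.card_empty]
  rw [card_filter_mem_cycIcc (by omega) (by push_cast; omega),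
    card_filter_mem_cycIcc le_rfl (by positivity)]
  omega

lemma ncard_neighborSet_le (hα : 1 ≤ α) (v : Vertex α m) :
    ((graph α m).neighborSet v).ncard ≤ 2 * α + (α + 2) + α * m := by
  rcases v with i | i | p
  · exact (ncard_neighborSet_long hα i).le
  · rw [ncard_neighborSet_side hα]
    nlinarith
  · rw [ncard_neighborSet_tiny hα]
    omega

end HighBoxicity

/-- for every `α ≥ 2` and every sufficiently large `n` divisible by
`2α+2`, there is a circular arc graph on `n` vertices with maximum degree exactly
`nα/(2(α+1)) + (α+2)` and boxicity strictly greater than `α`. -/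
theorem stmt14 (α : ℕ) (hα : 2 ≤ α) :
    ∃ N : ℕ, ∀ n : ℕ, N ≤ n → (2 * α + 2) ∣ n →
      ∃ G : SimpleGraph (Fin n),
        (∃ f : Fin n → ℝ × ℝ, IsCARep G f) ∧
        (∀ v, (G.neighborSet v).ncard ≤ n * α / (2 * (α + 1)) + (α + 2)) ∧
        (∃ v, (G.neighborSet v).ncard = n * α / (2 * (α + 1)) + (α + 2)) ∧
        ¬ BoxicityLE G α := by
  open HighBoxicity in
  refine ⟨2 * (2 * α + 2), fun n hn ⟨k, hk⟩ => ?_⟩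
  obtain ⟨m, rfl⟩ : ∃ m, k = m + 2 :=
    ⟨k - 2, by
      have h : (2 * α + 2) * 2 ≤ (2 * α + 2) * k := by rw [← hk]; omega
      have := Nat.le_of_mul_le_mul_left h (by omega)
      omega⟩
  have hdeg : n * α / (2 * (α + 1)) + (α + 2) = 2 * α + (α + 2) + α * m := by
    rw [hk, show (2 * α + 2) * (m + 2) * α = 2 * (α + 1) * ((m + 2) * α) by ring,
      Nat.mul_div_cancel_left _ (by omega)]
    ring
  let e : Fin n ≃ Vertex α m := (Fintype.equivFinOfCardEq (by simp [hk]; ring)).symm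
  refine ⟨(graph α m).comap e, ⟨_, (isCARep_graph (by omega)).comap e.injective⟩, fun v => ?_,
    ⟨e.symm (.inl 0), ?_⟩, fun h => not_boxicityLE_graph (h.of_comap e)⟩
  · rw [ncard_neighborSet_comap, hdeg]
    exact ncard_neighborSet_le (by omega) _
  · rw [ncard_neighborSet_comap, e.apply_symm_apply, hdeg]
    exact ncard_neighborSet_long (by omega) _
end
end

section
/- Let G be a circular arc graph with a representation F, and let r_inf(F) be the minimum over points P of the circle of the number of arcs of F containing P. Then box(G) ≤ r_inf(F) + 1. In particular box(G) ≤ r_inf(G) + 1, where r_inf(G) is the minimum of r_inf(F) over all representations F of G. -/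
noncomputable section

/-!
Cut the circle at a point `P` lying on the fewest arcs. Every arc avoiding `P` becomes an interval
of the line, and replacing each arc through `P` by the whole cut circle gives one interval graph
that agrees with `G` on pairs of arcs avoiding `P` and contains `G`. Each arc `w` through `P` is
then separated from its non-neighbours by a star interval graph (`w` is the point `0`, its
neighbours are `[0, 1]`, everybody else is the point `1`). These `r_inf(F) + 1` interval graphs
intersect to `G`.
-/

open Set

section IntervalGraphs

variable {V : Type*} (G : SimpleGraph V)

lemma boxicityLE_of_fintype {ι : Type*} [Fintype ι] (I : ι → V → Set ℝ)
    (hI : ∀ i v, ∃ a b : ℝ, a ≤ b ∧ I i v = Icc a b)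
    (hadj : ∀ u v, u ≠ v → (G.Adj u v ↔ ∀ i, (I i u ∩ I i v).Nonempty)) :
    BoxicityLE G (Fintype.card ι) := by
  set e := Fintype.equivFin ι
  refine ⟨fun k => I (e.symm k), fun k => hI (e.symm k), fun u v huv => ?_⟩
  rw [hadj u v huv, e.symm.surjective.forall]

def starIntervals [DecidableEq V] [DecidableRel G.Adj] (w : V) (v : V) : Set ℝ :=
  if v = w then Icc 0 0 else if G.Adj w v then Icc 0 1 else Icc 1 1

variable {G}

lemma starIntervals_isInterval [DecidableEq V] [DecidableRel G.Adj] (w v : V) :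
    ∃ a b : ℝ, a ≤ b ∧ starIntervals G w v = Icc a b := by
  unfold starIntervals
  split_ifs
  exacts [⟨0, 0, le_rfl, rfl⟩, ⟨0, 1, zero_le_one, rfl⟩, ⟨1, 1, le_rfl, rfl⟩]

lemma starIntervals_inter_nonempty_iff [DecidableEq V] [DecidableRel G.Adj] {u v : V}
    (w : V) (huv : u ≠ v) :
    (starIntervals G w u ∩ starIntervals G w v).Nonempty ↔ (u ≠ w ∧ v ≠ w) ∨ G.Adj u v := by
  unfold starIntervals
  by_cases hu : u = w <;> by_cases hv : v = w
  · exact absurd (hu.trans hv.symm) huv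
  · subst hu
    split_ifs <;> simp_all
  · subst hv
    split_ifs <;> simp_all [G.adj_comm]
  · split_ifs <;> simp_all

theorem boxicityLE_ncard_add_one_of_intervals {W : Set V} [Finite W] (J : V → Set ℝ)
    (hJ : ∀ v, ∃ a b : ℝ, a ≤ b ∧ J v = Icc a b)
    (hW : ∀ u ∈ W, ∀ v, (J u ∩ J v).Nonempty)
    (hJW : ∀ u v, u ≠ v → u ∉ W → v ∉ W → (G.Adj u v ↔ (J u ∩ J v).Nonempty)) :
    BoxicityLE G (W.ncard + 1) := by
  classical
  have := Fintype.ofFinite W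
  rw [← Nat.card_coe_set_eq, Nat.card_eq_fintype_card, ← Fintype.card_option]
  refine boxicityLE_of_fintype G (fun o => o.elim J fun w => starIntervals G w)
    (fun o v => o.rec (hJ v) fun w => starIntervals_isInterval (w : V) v) fun u v huv => ?_
  simp only [Option.forall, Option.elim, Subtype.forall,
    starIntervals_inter_nonempty_iff _ huv]
  refine ⟨fun h => ⟨?_, fun _ _ => Or.inr h⟩, fun ⟨hJuv, hstar⟩ => ?_⟩
  · by_cases hu : u ∈ W
    · exact hW u hu v
    by_cases hv : v ∈ W
    · exact inter_comm (J u) _ ▸ hW v hv u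
    exact (hJW u v huv hu hv).1 h
  · by_cases hu : u ∈ W
    · simpa using hstar u hu
    by_cases hv : v ∈ W
    · simpa using hstar v hv
    exact (hJW u v huv hu hv).2 hJuv

end IntervalGraphs

section Arcs

variable {p : ℝ}

lemma image_coe_Icc_eq_of_coe_eq {x y : ℝ} (ℓ : ℝ) (h : (x : AddCircle p) = y) :
    ((↑) : ℝ → AddCircle p) '' Icc x (x + ℓ) = (↑) '' Icc y (y + ℓ) := by
  have hshift : ((↑) : ℝ → AddCircle p) ∘ (· + (x - y)) = (↑) := by
    funext t
    simp [h]
  calc ((↑) : ℝ → AddCircle p) '' Icc x (x + ℓ)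
      = (↑) '' ((· + (x - y)) '' Icc y (y + ℓ)) := by
        rw [image_add_const_Icc]; congr 2 <;> ring
    _ = (↑) '' Icc y (y + ℓ) := by rw [← image_comp, hshift]

lemma exists_arcSet_eq_image_Icc (s ℓ p₀ : ℝ) :
    ∃ a ∈ Ioc p₀ (p₀ + 2 * Real.pi), arcSet s ℓ = (↑) '' Icc a (a + ℓ) := by
  have : Fact (0 < 2 * Real.pi) := ⟨Real.two_pi_pos⟩
  obtain ⟨a, ha, hcoe⟩ : ((s - ℓ : ℝ) : Circle2pi) ∈ (↑) '' Ioc p₀ (p₀ + 2 * Real.pi) := by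
    rw [AddCircle.coe_image_Ioc_eq]; trivial
  refine ⟨a, ha, ?_⟩
  rw [image_coe_Icc_eq_of_coe_eq ℓ hcoe, sub_add_cancel, arcSet,
    show (fun t : ℝ => ((s - t : ℝ) : Circle2pi)) = (↑) ∘ (s - ·) from rfl, image_comp,
    image_const_sub_Icc, sub_zero]

lemma Icc_subset_Ioc_of_coe_notMem_image {a ℓ p₀ : ℝ} (ha : a ∈ Ioc p₀ (p₀ + p))
    (h : (p₀ : AddCircle p) ∉ (↑) '' Icc a (a + ℓ)) : Icc a (a + ℓ) ⊆ Ioc p₀ (p₀ + p) := by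
  refine fun t ht => ⟨ha.1.trans_le ht.1, ht.2.trans ?_⟩
  by_contra! hlt
  exact h ⟨p₀ + p, ⟨ha.2, hlt.le⟩, AddCircle.coe_add_period p p₀⟩

lemma image_coe_inter_nonempty_iff [Fact (0 < p)] {p₀ : ℝ} {S T : Set ℝ}
    (hS : S ⊆ Ioc p₀ (p₀ + p)) (hT : T ⊆ Ioc p₀ (p₀ + p)) :
    (((↑) : ℝ → AddCircle p) '' S ∩ (↑) '' T).Nonempty ↔ (S ∩ T).Nonempty := by
  have hinj : InjOn ((↑) : ℝ → AddCircle p) (Ioc p₀ (p₀ + p)) :=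
    fun x hx y hy => (AddCircle.coe_eq_coe_iff_of_mem_Ioc hx hy).1
  rw [← hinj.image_inter hS hT, image_nonempty]

end Arcs

lemma boxicityLE_sInf_add_one {V : Type*} {G : SimpleGraph V} {S : Set ℕ} (hS : S.Nonempty)
    (h : ∀ m ∈ S, BoxicityLE G (m + 1)) : BoxicityLE G (sInf S + 1) :=
  h _ (Nat.sInf_mem hS)

/-- `r_inf(F)`: the least number of arcs of the family `g` through a point of the circle. -/
def minOverlap {V : Type*} (g : V → ℝ × ℝ) : ℕ :=
  sInf {m : ℕ | ∃ P : Circle2pi, m = {v : V | P ∈ arcSet (g v).1 (g v).2}.ncard}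

theorem IsCARep.boxicityLE_ncard_add_one {V : Type*} [Finite V] {G : SimpleGraph V}
    {f : V → ℝ × ℝ} (hf : IsCARep G f) (P : Circle2pi) :
    BoxicityLE G ({v | P ∈ arcSet (f v).1 (f v).2}.ncard + 1) := by
  classical
  obtain ⟨p₀, rfl⟩ := QuotientAddGroup.mk_surjective P
  have : Fact (0 < 2 * Real.pi) := ⟨Real.two_pi_pos⟩
  choose a ha harc using fun v => exists_arcSet_eq_image_Icc (f v).1 (f v).2 p₀
  set W := {v | (p₀ : Circle2pi) ∈ arcSet (f v).1 (f v).2}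
  have hcut : ∀ v ∉ W, Icc (a v) (a v + (f v).2) ⊆ Ioc p₀ (p₀ + 2 * Real.pi) :=
    fun v hv => Icc_subset_Ioc_of_coe_notMem_image (ha v) (harc v ▸ hv)
  set J : V → Set ℝ := fun v =>
    if v ∈ W then Icc p₀ (p₀ + 2 * Real.pi) else Icc (a v) (a v + (f v).2) with hJ
  have hJ_sub : ∀ v, J v ⊆ Icc p₀ (p₀ + 2 * Real.pi) := fun v => by
    by_cases hv : v ∈ W
    · simp only [hJ, if_pos hv, subset_rfl]
    · simpa only [hJ, if_neg hv] using (hcut v hv).trans Ioc_subset_Icc_self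
  have hJ_nonempty : ∀ v, (J v).Nonempty := fun v => by
    by_cases hv : v ∈ W
    · simpa only [hJ, if_pos hv, nonempty_Icc] using by linarith [Real.two_pi_pos]
    · simpa only [hJ, if_neg hv, nonempty_Icc] using by linarith [(hf.1 v).1]
  refine boxicityLE_ncard_add_one_of_intervals J (fun v => ?_) (fun u hu v => ?_)
    (fun u v huv hu hv => ?_)
  · simp only [hJ]
    split_ifs
    exacts [⟨_, _, by linarith [Real.two_pi_pos], rfl⟩, ⟨_, _, by linarith [(hf.1 v).1], rfl⟩]
  · have hJu : J u = Icc p₀ (p₀ + 2 * Real.pi) := if_pos hu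
    rw [hJu, inter_eq_right.2 (hJ_sub v)]
    exact hJ_nonempty v
  · simp only [hJ, if_neg hu, if_neg hv]
    rw [hf.2 u v huv, harc u, harc v]
    exact image_coe_inter_nonempty_iff (hcut u hu) (hcut v hv)

theorem IsCARep.boxicityLE_minOverlap_add_one {V : Type*} [Finite V] {G : SimpleGraph V}
    {f : V → ℝ × ℝ} (hf : IsCARep G f) : BoxicityLE G (minOverlap f + 1) :=
  boxicityLE_sInf_add_one ⟨_, 0, rfl⟩ fun _ ⟨P, hP⟩ => hP ▸ hf.boxicityLE_ncard_add_one P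

/-- for any circular-arc representation `f` of `G`,
`box(G) ≤ r_inf(F) + 1`, where `r_inf(F)` is the minimum over points `P` of the circle
of the number of arcs containing `P`; in particular `box(G) ≤ r_inf(G) + 1`, where
`r_inf(G)` is the minimum of `r_inf(F)` over all representations `F` of `G`. -/
theorem stmt16 {V : Type*} [Fintype V] (G : SimpleGraph V) (f : V → ℝ × ℝ)
    (hf : IsCARep G f) :
    BoxicityLE G
      (sInf {m : ℕ | ∃ P : Circle2pi,
        m = {v : V | P ∈ arcSet (f v).1 (f v).2}.ncard} + 1) ∧
    BoxicityLE G
      (sInf {m : ℕ | ∃ g : V → ℝ × ℝ, IsCARep G g ∧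
        m = sInf {m' : ℕ | ∃ P : Circle2pi,
          m' = {v : V | P ∈ arcSet (g v).1 (g v).2}.ncard}} + 1) :=
  ⟨hf.boxicityLE_minOverlap_add_one, boxicityLE_sInf_add_one ⟨_, f, hf, rfl⟩
    fun _ ⟨_, hg, hm⟩ => hm ▸ hg.boxicityLE_minOverlap_add_one⟩

end
end

section
/- Let F be a family of arcs representing a circular arc graph G with minimum circular cover number L(F) > 4. Then there exist three points P_0, P_1, P_2 on the circle such that the overlap sets O(P_0), O(P_1), O(P_2) are pairwise disjoint, i.e., every arc of F contains at most one of the three points. -/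
noncomputable section

/-- Any arc containing a point `P` can be rewritten as `P + Icc a b` with `a ≤ 0 ≤ b`. -/
private lemma arc_eq (s ℓ : ℝ) {P : Circle2pi} (hP : P ∈ arcSet s ℓ) :
    ∃ ab : ℝ × ℝ, ab.1 ≤ 0 ∧ 0 ≤ ab.2 ∧
      arcSet s ℓ = (fun u : ℝ => P + (u : Circle2pi)) '' Set.Icc ab.1 ab.2 := by
  obtain ⟨x, hx, hxP⟩ := hP
  refine ⟨(x - ℓ, x), by simp; linarith [hx.2], hx.1, ?_⟩
  ext q
  constructor
  · rintro ⟨t, ht, rfl⟩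
    refine ⟨x - t, ⟨by simp; linarith [ht.2], by simp; linarith [ht.1]⟩, ?_⟩
    rw [← hxP]
    show ((s - x : ℝ) : Circle2pi) + ((x - t : ℝ) : Circle2pi) = ((s - t : ℝ) : Circle2pi)
    rw [← AddCircle.coe_add]; ring_nf
  · rintro ⟨u, hu, rfl⟩
    refine ⟨x - u, ⟨by simp at hu ⊢; linarith [hu.2], by simp at hu ⊢; linarith [hu.1]⟩, ?_⟩
    rw [← hxP]
    show ((s - (x - u) : ℝ) : Circle2pi) = ((s - x : ℝ) : Circle2pi) + (u : Circle2pi)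
    rw [← AddCircle.coe_add]; ring_nf

/-- The union of all arcs of the family containing a point `P` is covered by
at most two arcs of the family. -/
private lemma cover_two {V : Type*} [Fintype V] (f : V → ℝ × ℝ) (P : Circle2pi) :
    ∃ s : Finset V, s.card ≤ 2 ∧
      (⋃ v ∈ {v : V | P ∈ arcSet (f v).1 (f v).2}, arcSet (f v).1 (f v).2)
        ⊆ ⋃ v ∈ s, arcSet (f v).1 (f v).2 := by
  classical
  set O : Finset V := Finset.univ.filter (fun v => P ∈ arcSet (f v).1 (f v).2) with hO_def
  have hmemO : ∀ v, v ∈ O ↔ P ∈ arcSet (f v).1 (f v).2 := by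
    intro v; simp [hO_def]
  by_cases hO : O.Nonempty
  · choose g hg1 hg2 hg3 using
      fun (v : V) (h : P ∈ arcSet (f v).1 (f v).2) => arc_eq (f v).1 (f v).2 h
    set A : V → ℝ := fun v => if h : P ∈ arcSet (f v).1 (f v).2 then (g v h).1 else 0 with hA
    set B : V → ℝ := fun v => if h : P ∈ arcSet (f v).1 (f v).2 then (g v h).2 else 0 with hB
    have harc : ∀ v, P ∈ arcSet (f v).1 (f v).2 →
        arcSet (f v).1 (f v).2 = (fun u : ℝ => P + (u : Circle2pi)) '' Set.Icc (A v) (B v) := by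
      intro v h; rw [hA, hB]; simp only [dif_pos h]; exact hg3 v h
    have hAle : ∀ v, v ∈ O → A v ≤ 0 := by
      intro v hv; rw [hmemO] at hv; rw [hA]; simp only [dif_pos hv]; exact hg1 v hv
    have hBge : ∀ v, v ∈ O → 0 ≤ B v := by
      intro v hv; rw [hmemO] at hv; rw [hB]; simp only [dif_pos hv]; exact hg2 v hv
    obtain ⟨vm, hvm, hmin⟩ := O.exists_min_image A hO
    obtain ⟨vM, hvM, hmax⟩ := O.exists_max_image B hO
    refine ⟨{vm, vM}, Finset.card_le_two, ?_⟩
    intro q hq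
    simp only [Set.mem_iUnion, Set.mem_setOf_eq] at hq
    obtain ⟨v, hv, hqv⟩ := hq
    have hvO : v ∈ O := (hmemO v).mpr hv
    rw [harc v hv] at hqv
    obtain ⟨u, hu, rfl⟩ := hqv
    simp only [Set.mem_iUnion, Finset.mem_insert, Finset.mem_singleton]
    rcases le_or_gt u 0 with h0 | h0
    · refine ⟨vm, Or.inl rfl, ?_⟩
      rw [harc vm ((hmemO vm).mp hvm)]
      exact ⟨u, ⟨le_trans (hmin v hvO) hu.1, le_trans h0 (hBge vm hvm)⟩, rfl⟩
    · refine ⟨vM, Or.inr rfl, ?_⟩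
      rw [harc vM ((hmemO vM).mp hvM)]
      exact ⟨u, ⟨le_trans (hAle vM hvM) h0.le, le_trans hu.2 (hmax v hvO)⟩, rfl⟩
  · refine ⟨∅, by simp, ?_⟩
    intro q hq
    simp only [Set.mem_iUnion, Set.mem_setOf_eq] at hq
    obtain ⟨v, hv, _⟩ := hq
    exact absurd ((hmemO v).mpr hv) (fun h => hO ⟨v, h⟩)

/-- if `F` is a family of arcs representing `G` whose every circular cover
has more than 4 arcs (`L(F) > 4`), then there are three points of the circle whose
overlap sets are pairwise disjoint (every arc contains at most one of the points). -/
theorem stmt18 {V : Type*} [Fintype V] (G : SimpleGraph V) (f : V → ℝ × ℝ)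
    (hf : IsCARep G f)
    (hL : ∀ s : Finset V, (⋃ v ∈ s, arcSet (f v).1 (f v).2) = Set.univ → 4 < s.card) :
    ∃ P₀ P₁ P₂ : Circle2pi,
      {v : V | P₀ ∈ arcSet (f v).1 (f v).2} ∩ {v : V | P₁ ∈ arcSet (f v).1 (f v).2} = ∅ ∧
      {v : V | P₀ ∈ arcSet (f v).1 (f v).2} ∩ {v : V | P₂ ∈ arcSet (f v).1 (f v).2} = ∅ ∧
      {v : V | P₁ ∈ arcSet (f v).1 (f v).2} ∩ {v : V | P₂ ∈ arcSet (f v).1 (f v).2} = ∅ := by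
  classical
  set R : Circle2pi → Set Circle2pi :=
    fun P => ⋃ v ∈ {v : V | P ∈ arcSet (f v).1 (f v).2}, arcSet (f v).1 (f v).2 with hR
  set P₀ : Circle2pi := 0 with hP0
  obtain ⟨s₀, hs₀c, hs₀⟩ := cover_two f P₀
  have h1 : R P₀ ≠ Set.univ := by
    intro h
    have : (⋃ v ∈ s₀, arcSet (f v).1 (f v).2) = Set.univ :=
      Set.eq_univ_of_univ_subset (h ▸ hs₀)
    have := hL s₀ this
    omega
  obtain ⟨P₁, hP₁⟩ := Set.ne_univ_iff_exists_notMem _ |>.mp h1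
  obtain ⟨s₁, hs₁c, hs₁⟩ := cover_two f P₁
  have h2 : R P₀ ∪ R P₁ ≠ Set.univ := by
    intro h
    have hsub : Set.univ ⊆ ⋃ v ∈ (s₀ ∪ s₁ : Finset V), arcSet (f v).1 (f v).2 := by
      rw [← h]
      rintro q (hq | hq)
      · have := hs₀ hq
        simp only [Set.mem_iUnion] at this ⊢
        obtain ⟨v, hv, hqv⟩ := this
        exact ⟨v, Finset.mem_union_left _ hv, hqv⟩
      · have := hs₁ hq
        simp only [Set.mem_iUnion] at this ⊢
        obtain ⟨v, hv, hqv⟩ := this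
        exact ⟨v, Finset.mem_union_right _ hv, hqv⟩
    have hcard : (s₀ ∪ s₁).card ≤ 4 := by
      have := Finset.card_union_le s₀ s₁; omega
    have := hL (s₀ ∪ s₁) (Set.eq_univ_of_univ_subset hsub)
    omega
  obtain ⟨P₂, hP₂⟩ := Set.ne_univ_iff_exists_notMem _ |>.mp h2
  have hP₂₀ : P₂ ∉ R P₀ := fun h => hP₂ (Or.inl h)
  have hP₂₁ : P₂ ∉ R P₁ := fun h => hP₂ (Or.inr h)
  have mem_R : ∀ (P Q : Circle2pi) (v : V), P ∈ arcSet (f v).1 (f v).2 →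
      Q ∈ arcSet (f v).1 (f v).2 → Q ∈ R P := by
    intro P Q v hP hQ
    simp only [hR, Set.mem_iUnion, Set.mem_setOf_eq]
    exact ⟨v, hP, hQ⟩
  refine ⟨P₀, P₁, P₂, ?_, ?_, ?_⟩
  · ext v
    simp only [Set.mem_inter_iff, Set.mem_setOf_eq, Set.mem_empty_iff_false, iff_false, not_and]
    intro h0 h1'
    exact hP₁ (mem_R P₀ P₁ v h0 h1')
  · ext v
    simp only [Set.mem_inter_iff, Set.mem_setOf_eq, Set.mem_empty_iff_false, iff_false, not_and]
    intro h0 h2'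
    exact hP₂₀ (mem_R P₀ P₂ v h0 h2')
  · ext v
    simp only [Set.mem_inter_iff, Set.mem_setOf_eq, Set.mem_empty_iff_false, iff_false, not_and]
    intro h1' h2'
    exact hP₂₁ (mem_R P₁ P₂ v h1' h2')

end
end

section
/- Let G be a circular arc graph admitting a representation F whose minimum circular cover number L(F) exceeds 4 (in particular, if the maximum circular cover number L_max(G) > 4). Then the boxicity of G is at most 3. -/
noncomputable section

/-!
Pick three points of the circle such that no arc contains two of them. They exist because
the arcs through one point are covered by two of them (the ones reaching farthest to either
side), so when every circular cover needs more than four arcs, the arcs through one or two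
points leave a point uncovered. Cutting the circle open at each of the three points gives an
interval graph containing `G` (arcs through the cut point become the whole window), and two
non-adjacent vertices both miss one of the points, where cutting preserves the disjointness
of their arcs.
-/

namespace CircularArcGraph

open Set Real Function

local instance : Fact (0 < 2 * π) := ⟨two_pi_pos⟩

lemma coe_toIcoMod (θ s : ℝ) : ((toIcoMod two_pi_pos θ s : ℝ) : Circle2pi) = s := by
  conv_rhs => rw [← toIcoMod_add_toIcoDiv_zsmul two_pi_pos θ s]
  rw [AddCircle.coe_add, AddCircle.coe_zsmul, AddCircle.coe_period, smul_zero, add_zero]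

lemma injOn_coe_Ico (θ : ℝ) : InjOn ((↑) : ℝ → Circle2pi) (Ico θ (θ + 2 * π)) :=
  fun _ hx _ hy => (AddCircle.coe_eq_coe_iff_of_mem_Ico hx hy).mp

def arcLift (θ s ℓ : ℝ) : Set ℝ :=
  Icc (toIcoMod two_pi_pos θ s - ℓ) (toIcoMod two_pi_pos θ s)

lemma arcSet_eq_image_arcLift (θ s ℓ : ℝ) :
    arcSet s ℓ = ((↑) : ℝ → Circle2pi) '' arcLift θ s ℓ := by
  have h := image_const_sub_Icc (toIcoMod two_pi_pos θ s) 0 ℓ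
  rw [sub_zero] at h
  rw [arcLift, ← h, image_image, arcSet]
  refine image_congr fun t _ => ?_
  rw [AddCircle.coe_sub, AddCircle.coe_sub, coe_toIcoMod]

lemma mem_arcLift_self_iff (θ s ℓ : ℝ) :
    θ ∈ arcLift θ s ℓ ↔ (θ : Circle2pi) ∈ arcSet s ℓ := by
  have hθ := toIcoMod_mem_Ico two_pi_pos θ s
  refine ⟨fun h => arcSet_eq_image_arcLift θ s ℓ ▸ mem_image_of_mem _ h, fun h => ?_⟩
  rw [arcSet_eq_image_arcLift θ] at h
  obtain ⟨x, hx, hx_eq⟩ := h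
  have hxθ : x ≤ θ := by
    by_contra! hlt
    have hθ_mem : θ ∈ Ico θ (θ + 2 * π) := ⟨le_rfl, by linarith [two_pi_pos]⟩
    exact hlt.ne' (injOn_coe_Ico θ ⟨hlt.le, hx.2.trans_lt hθ.2⟩ hθ_mem hx_eq)
  exact ⟨hx.1.trans hxθ, hθ.1⟩

lemma arcLift_subset_Ico_of_notMem {θ s ℓ : ℝ} (h : (θ : Circle2pi) ∉ arcSet s ℓ) :
    arcLift θ s ℓ ⊆ Ico θ (θ + 2 * π) := by
  have hθ := toIcoMod_mem_Ico two_pi_pos θ s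
  rw [← mem_arcLift_self_iff, arcLift, mem_Icc, not_and_or, not_le, not_le] at h
  exact Icc_subset_Ico (h.resolve_right (not_lt.mpr hθ.1)).le hθ.2

open Classical in
/-- The interval of the arc `(s, ℓ)` once the circle is cut open at `θ`. -/
def cutInterval (θ s ℓ : ℝ) : Set ℝ :=
  if (θ : Circle2pi) ∈ arcSet s ℓ then Icc θ (θ + 2 * π) else arcLift θ s ℓ

section CutInterval

variable {θ s ℓ s' ℓ' : ℝ}

lemma cutInterval_subset_Icc : cutInterval θ s ℓ ⊆ Icc θ (θ + 2 * π) := by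
  unfold cutInterval
  split_ifs with h
  · exact subset_rfl
  · exact (arcLift_subset_Ico_of_notMem h).trans Ico_subset_Icc_self

lemma exists_cutInterval_eq_Icc (hℓ : 0 ≤ ℓ) :
    ∃ a b, a ≤ b ∧ cutInterval θ s ℓ = Icc a b := by
  unfold cutInterval
  split_ifs
  · exact ⟨_, _, by linarith [two_pi_pos], rfl⟩
  · exact ⟨_, _, by linarith, rfl⟩

lemma cutInterval_nonempty (h : (arcSet s ℓ).Nonempty) : (cutInterval θ s ℓ).Nonempty := by
  unfold cutInterval
  split_ifs
  · exact nonempty_Icc.mpr (by linarith [two_pi_pos])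
  · exact (arcSet_eq_image_arcLift θ s ℓ ▸ h).of_image

lemma cutInterval_inter_nonempty_iff (h : (θ : Circle2pi) ∉ arcSet s ℓ)
    (h' : (θ : Circle2pi) ∉ arcSet s' ℓ') :
    (cutInterval θ s ℓ ∩ cutInterval θ s' ℓ').Nonempty ↔
      (arcSet s ℓ ∩ arcSet s' ℓ').Nonempty := by
  rw [cutInterval, cutInterval, if_neg h, if_neg h', arcSet_eq_image_arcLift θ,
    arcSet_eq_image_arcLift θ s', ← (injOn_coe_Ico θ).image_inter
      (arcLift_subset_Ico_of_notMem h) (arcLift_subset_Ico_of_notMem h'), image_nonempty]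

lemma cutInterval_inter_nonempty (h : (arcSet s ℓ ∩ arcSet s' ℓ').Nonempty) :
    (cutInterval θ s ℓ ∩ cutInterval θ s' ℓ').Nonempty := by
  by_cases hθ : (θ : Circle2pi) ∈ arcSet s ℓ <;>
    by_cases hθ' : (θ : Circle2pi) ∈ arcSet s' ℓ'
  · refine ⟨θ, ?_, ?_⟩ <;> simp [cutInterval, hθ, hθ', two_pi_pos.le]
  · obtain ⟨y, hy⟩ := cutInterval_nonempty (θ := θ) h.right
    exact ⟨y, by simpa [cutInterval, hθ] using cutInterval_subset_Icc hy, hy⟩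
  · obtain ⟨y, hy⟩ := cutInterval_nonempty (θ := θ) h.left
    exact ⟨y, hy, by simpa [cutInterval, hθ'] using cutInterval_subset_Icc hy⟩
  · exact (cutInterval_inter_nonempty_iff hθ hθ').mpr h

end CutInterval

lemma exists_forall_notMem_of_pairwise_disjoint {ι α : Type*} [Fintype ι]
    (hι : 2 < Fintype.card ι) {O : ι → Set α} (hO : Pairwise (Disjoint on O)) (u v : α) :
    ∃ i, u ∉ O i ∧ v ∉ O i := by
  classical
  set A : α → Finset ι := fun x => Finset.univ.filter (x ∈ O ·)
  have hA : ∀ x, (A x).card ≤ 1 := fun x =>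
    Finset.card_le_one.mpr fun i hi j hj => by
      by_contra hij
      exact disjoint_left.mp (hO hij) (Finset.mem_filter.mp hi).2 (Finset.mem_filter.mp hj).2
  have hcard : (A u ∪ A v).card < (Finset.univ : Finset ι).card := by
    have := Finset.card_union_le (A u) (A v)
    have := hA u
    have := hA v
    rw [Finset.card_univ]
    omega
  obtain ⟨i, -, hi⟩ := Finset.exists_mem_notMem_of_card_lt_card hcard
  exact ⟨i, by simpa [A, not_or] using hi⟩

variable {V : Type*} (f : V → ℝ × ℝ)

def overlapSet (p : Circle2pi) : Set V :=
  {v | p ∈ arcSet (f v).1 (f v).2}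

theorem boxicityLE_of_forall_exists_notMem_overlapSet {G : SimpleGraph V} {k : ℕ}
    (hf : IsCARep G f) (θ : Fin k → ℝ)
    (hθ : ∀ u v, ∃ i, u ∉ overlapSet f (θ i) ∧ v ∉ overlapSet f (θ i)) :
    BoxicityLE G k := by
  refine ⟨fun i v => cutInterval (θ i) (f v).1 (f v).2,
    fun i v => exists_cutInterval_eq_Icc (hf.1 v).1.le, fun u v huv => ?_⟩
  rw [hf.2 u v huv]
  refine ⟨fun h i => cutInterval_inter_nonempty h, fun h => ?_⟩
  obtain ⟨i, hu, hv⟩ := hθ u v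
  exact (cutInterval_inter_nonempty_iff hu hv).mp (h i)

lemma exists_card_le_two_forall_arcSet_subset [Fintype V] (θ : ℝ) :
    ∃ t : Finset V, t.card ≤ 2 ∧ ∀ v ∈ overlapSet f θ,
      arcSet (f v).1 (f v).2 ⊆ ⋃ w ∈ t, arcSet (f w).1 (f w).2 := by
  classical
  set S := Finset.univ.filter (· ∈ overlapSet f θ)
  have hS : ∀ {v}, v ∈ S ↔ v ∈ overlapSet f θ := by simp [S]
  rcases S.eq_empty_or_nonempty with hempty | hne
  · exact ⟨∅, by simp, fun v hv => absurd (hS.mpr hv) (hempty ▸ Finset.notMem_empty v)⟩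
  set r : V → ℝ := fun v => toIcoMod two_pi_pos θ (f v).1
  obtain ⟨a, ha, hamin⟩ := S.exists_min_image (fun v => r v - (f v).2) hne
  obtain ⟨b, hb, hbmax⟩ := S.exists_max_image r hne
  have hθ : ∀ w ∈ S, θ ∈ arcLift θ (f w).1 (f w).2 := fun w hw =>
    (mem_arcLift_self_iff _ _ _).mpr (hS.mp hw)
  refine ⟨{a, b}, Finset.card_le_two, fun v hv => ?_⟩
  -- Lifted at `θ`, the arcs through `θ` are intervals containing `θ`, so the one reaching
  -- farthest left and the one reaching farthest right cover all of them.
  have hlift :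
      arcLift θ (f v).1 (f v).2 ⊆ arcLift θ (f a).1 (f a).2 ∪ arcLift θ (f b).1 (f b).2 :=
    calc arcLift θ (f v).1 (f v).2 ⊆ Icc (r a - (f a).2) (r b) :=
          Icc_subset_Icc (hamin v (hS.mpr hv)) (hbmax v (hS.mpr hv))
      _ ⊆ Icc (r a - (f a).2) θ ∪ Icc θ (r b) := Icc_subset_Icc_union_Icc
      _ ⊆ _ := union_subset_union (Icc_subset_Icc_right (hθ a ha).2)
          (Icc_subset_Icc_left (hθ b hb).1)
  rw [arcSet_eq_image_arcLift θ]
  rintro _ ⟨y, hy, rfl⟩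
  rcases hlift hy with hy | hy <;>
    exact mem_biUnion (by simp) (arcSet_eq_image_arcLift θ _ _ ▸ mem_image_of_mem _ hy)

theorem exists_disjoint_overlapSet [Fintype V] {n : ℕ}
    (hL : ∀ s : Finset V, (⋃ v ∈ s, arcSet (f v).1 (f v).2) = univ → n < s.card)
    (P : Finset ℝ) (hP : 2 * P.card ≤ n) :
    ∃ θ : ℝ, ∀ p ∈ P, Disjoint (overlapSet f θ) (overlapSet f p) := by
  classical
  choose t ht_card ht_cover using exists_card_le_two_forall_arcSet_subset f
  have hT : (⋃ v ∈ P.biUnion t, arcSet (f v).1 (f v).2) ≠ univ := fun h => by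
    have := hL _ h
    have := P.card_biUnion_le_card_mul t 2 fun p _ => ht_card p
    omega
  obtain ⟨q, hq⟩ := (ne_univ_iff_exists_notMem _).mp hT
  obtain ⟨θ, rfl⟩ := QuotientAddGroup.mk_surjective q
  refine ⟨θ, fun p hp => disjoint_left.mpr fun v hvθ hvp => hq ?_⟩
  obtain ⟨w, hw, hθw⟩ := mem_iUnion₂.mp (ht_cover p v hvp hvθ)
  exact mem_iUnion₂.mpr ⟨w, Finset.mem_biUnion.mpr ⟨p, hp, hw⟩, hθw⟩

theorem exists_three_pairwise_disjoint_overlapSet [Fintype V]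
    (hL : ∀ s : Finset V, (⋃ v ∈ s, arcSet (f v).1 (f v).2) = univ → 4 < s.card) :
    ∃ θ : Fin 3 → ℝ, Pairwise (Disjoint on fun i => overlapSet f (θ i)) := by
  classical
  obtain ⟨θ₂, h₂⟩ := exists_disjoint_overlapSet f hL {0} (by simp)
  obtain ⟨θ₃, h₃⟩ := exists_disjoint_overlapSet f hL {0, θ₂}
    (by linarith [Finset.card_le_two (a := (0 : ℝ)) (b := θ₂)])
  refine ⟨![0, θ₂, θ₃], (pairwise_disjoint_on _).mpr fun i j hij => ?_⟩
  fin_cases i <;> fin_cases j <;> simp at hij ⊢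
  · exact (h₂ 0 (by simp)).symm
  · exact (h₃ 0 (by simp)).symm
  · exact (h₃ θ₂ (by simp)).symm

end CircularArcGraph

/-- a circular arc graph admitting a representation whose minimum circular
cover number exceeds 4 has boxicity at most 3. -/
theorem stmt19 {V : Type*} [Fintype V] (G : SimpleGraph V) (f : V → ℝ × ℝ)
    (hf : IsCARep G f)
    (hL : ∀ s : Finset V, (⋃ v ∈ s, arcSet (f v).1 (f v).2) = Set.univ → 4 < s.card) :
    BoxicityLE G 3 := by
  obtain ⟨θ, hθ⟩ := CircularArcGraph.exists_three_pairwise_disjoint_overlapSet f hL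
  exact CircularArcGraph.boxicityLE_of_forall_exists_notMem_overlapSet f hf θ
    (CircularArcGraph.exists_forall_notMem_of_pairwise_disjoint (by simp) hθ)

end
end
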